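/- arXiv:1807.05708 — 7 statements merged into one kernel-verified Lean document; each statement's English description precedes it below -/
import Mathlib

section
/- Let n be a positive integer and let K : (0,∞) × (0,∞) → ℝ be a smooth function satisfying the n-dimensional hyperbolic radial heat equation ∂_t K = ∂_r² K + (n−1) coth(r) ∂_r K for all t > 0 and r > 0. Define v(t,r) = −(e^{−nt}/(2π sinh r)) ∂_r K(t,r). Then v satisfies the (n+2)-dimensional hyperbolic radial heat equation: ∂_t v = ∂_r² v + (n+1) coth(r) ∂_r v for all t > 0 and r > 0. -/
open Real Set

private lemma pd_snd {g : ℝ × ℝ → ℝ} {p : ℝ × ℝ} (hg : DifferentiableAt ℝ g p) :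
    HasDerivAt (fun x => g (p.1, x)) (fderiv ℝ g p (0, 1)) p.2 := by
  have h : HasDerivAt (fun x : ℝ => ((p.1 : ℝ), x)) ((0 : ℝ), (1 : ℝ)) p.2 :=
    (hasDerivAt_const _ _).prodMk (hasDerivAt_id _)
  exact hg.hasFDerivAt.comp_hasDerivAt p.2 h

private lemma pd_fst {g : ℝ × ℝ → ℝ} {p : ℝ × ℝ} (hg : DifferentiableAt ℝ g p) :
    HasDerivAt (fun τ => g (τ, p.2)) (fderiv ℝ g p (1, 0)) p.1 := by
  have h : HasDerivAt (fun τ : ℝ => (τ, (p.2 : ℝ))) ((1 : ℝ), (0 : ℝ)) p.1 :=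
    (hasDerivAt_id _).prodMk (hasDerivAt_const _ _)
  exact hg.hasFDerivAt.comp_hasDerivAt p.1 h

/-- If `K` satisfies the `n`-dimensional hyperbolic radial heat equation, then
`v(t,r) = -(e^{-nt}/(2π sinh r)) ∂_r K(t,r)` satisfies the `(n+2)`-dimensional one. -/
theorem hyperbolic_heat_recurrence_step (n : ℕ) (hn : 0 < n) (K v : ℝ → ℝ → ℝ)
    (hK : ContDiffOn ℝ (⊤ : ℕ∞) (fun p : ℝ × ℝ => K p.1 p.2) (Set.Ioi 0 ×ˢ Set.Ioi 0))
    (heq : ∀ t ∈ Set.Ioi (0 : ℝ), ∀ r ∈ Set.Ioi (0 : ℝ),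
      deriv (fun τ => K τ r) t =
        deriv (fun x => deriv (fun y => K t y) x) r +
          ((n : ℝ) - 1) * (Real.cosh r / Real.sinh r) * deriv (fun x => K t x) r)
    (hv : ∀ t r : ℝ, v t r =
      -(Real.exp (-(n : ℝ) * t) / (2 * π * Real.sinh r)) * deriv (fun x => K t x) r) :
    ∀ t ∈ Set.Ioi (0 : ℝ), ∀ r ∈ Set.Ioi (0 : ℝ),
      deriv (fun τ => v τ r) t =
        deriv (fun x => deriv (fun y => v t y) x) r +
          ((n : ℝ) + 1) * (Real.cosh r / Real.sinh r) * deriv (fun x => v t x) r := by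
  intro t ht r hr
  have hπ : (0:ℝ) < 2 * π := by positivity
  have hs : 0 < Real.sinh r := Real.sinh_pos_iff.2 hr
  obtain ⟨F, hF⟩ : ∃ F : ℝ × ℝ → ℝ, F = fun p : ℝ × ℝ => K p.1 p.2 := ⟨_, rfl⟩
  obtain ⟨U, hUd⟩ : ∃ U : Set (ℝ × ℝ), U = Ioi 0 ×ˢ Ioi 0 := ⟨_, rfl⟩
  have hU : IsOpen U := by rw [hUd]; exact isOpen_Ioi.prod isOpen_Ioi
  have hKU : ContDiffOn ℝ (⊤ : ℕ∞) F U := by rw [hF, hUd]; exact hK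
  have hdiff : ∀ {g : ℝ × ℝ → ℝ}, ContDiffOn ℝ (⊤ : ℕ∞) g U → ∀ p ∈ U, DifferentiableAt ℝ g p :=
    fun hg p hp => (hg.contDiffAt (hU.mem_nhds hp)).differentiableAt (by simp)
  have hmem : ∀ {a b : ℝ}, 0 < a → 0 < b → (a, b) ∈ U := by
    intro a b ha hb; rw [hUd]; exact ⟨ha, hb⟩
  have hF' : ContDiffOn ℝ (⊤ : ℕ∞) (fun p => fderiv ℝ F p) U := hKU.fderiv_of_isOpen hU (by simp)
  obtain ⟨f1, hf1e⟩ : ∃ f : ℝ × ℝ → ℝ, f = fun p => fderiv ℝ F p (0, 1) := ⟨_, rfl⟩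
  obtain ⟨ft, hfte⟩ : ∃ f : ℝ × ℝ → ℝ, f = fun p => fderiv ℝ F p (1, 0) := ⟨_, rfl⟩
  have hf1 : ContDiffOn ℝ (⊤ : ℕ∞) f1 U := by rw [hf1e]; exact hF'.clm_apply contDiffOn_const
  have hft : ContDiffOn ℝ (⊤ : ℕ∞) ft U := by rw [hfte]; exact hF'.clm_apply contDiffOn_const
  have hf1' : ContDiffOn ℝ (⊤ : ℕ∞) (fun p => fderiv ℝ f1 p) U := hf1.fderiv_of_isOpen hU (by simp)
  obtain ⟨f2, hf2e⟩ : ∃ f : ℝ × ℝ → ℝ, f = fun p => fderiv ℝ f1 p (0, 1) := ⟨_, rfl⟩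
  have hf2 : ContDiffOn ℝ (⊤ : ℕ∞) f2 U := by rw [hf2e]; exact hf1'.clm_apply contDiffOn_const
  -- first partial in r
  have h1 : ∀ τ ∈ Ioi (0:ℝ), ∀ x ∈ Ioi (0:ℝ), deriv (fun y => K τ y) x = f1 (τ, x) := by
    intro τ hτ x hx
    have := (pd_snd (hdiff hKU (τ, x) (hmem hτ hx))).deriv
    rw [hf1e]
    simpa [hF] using this
  -- first partial in t
  have h2 : ∀ x ∈ Ioi (0:ℝ), deriv (fun τ => K τ x) t = ft (t, x) := by
    intro x hx
    have := (pd_fst (hdiff hKU (t, x) (hmem ht hx))).deriv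
    rw [hfte]
    simpa [hF] using this
  -- second partial in r, as hasDerivAt and deriv
  have hf1snd : ∀ x ∈ Ioi (0:ℝ), HasDerivAt (fun y => f1 (t, y)) (f2 (t, x)) x := by
    intro x hx
    have := pd_snd (hdiff hf1 (t, x) (hmem ht hx))
    rw [hf2e]; exact this
  have hsecond : ∀ x ∈ Ioi (0:ℝ),
      deriv (fun y => deriv (fun z => K t z) y) x = f2 (t, x) := by
    intro x hx
    have hev : (fun y => deriv (fun z => K t z) y) =ᶠ[nhds x] fun y => f1 (t, y) :=
      Filter.eventually_of_mem (Ioi_mem_nhds hx) (fun y hy => h1 t ht y hy)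
    rw [hev.deriv_eq]
    exact (hf1snd x hx).deriv
  -- the PDE in terms of f's
  have hPDE : ∀ x ∈ Ioi (0:ℝ), ft (t, x) =
      f2 (t, x) + ((n : ℝ) - 1) * (Real.cosh x / Real.sinh x) * f1 (t, x) := by
    intro x hx
    have := heq t ht x hx
    rwa [h2 x hx, hsecond x hx, h1 t ht x hx] at this
  -- Clairaut symmetry at (t, r)
  have hp : (t, r) ∈ U := hmem ht hr
  have hF'd : DifferentiableAt ℝ (fun p => fderiv ℝ F p) (t, r) := (hF'.contDiffAt (hU.mem_nhds hp)).differentiableAt (by simp)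
  have happ : ∀ w : ℝ × ℝ, HasFDerivAt (fun q => fderiv ℝ F q w)
      ((ContinuousLinearMap.apply ℝ ℝ w).comp (fderiv ℝ (fun p => fderiv ℝ F p) (t, r)))
      (t, r) :=
    fun w => (ContinuousLinearMap.apply ℝ ℝ w).hasFDerivAt.comp _ hF'd.hasFDerivAt
  have hsymm : ∀ w w' : ℝ × ℝ, fderiv ℝ (fun p => fderiv ℝ F p) (t, r) w w' =
      fderiv ℝ (fun p => fderiv ℝ F p) (t, r) w' w := by
    intro w w'
    refine second_derivative_symmetric_of_eventually_of_real (f := F) ?_ hF'd.hasFDerivAt w w'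
    exact Filter.eventually_of_mem (hU.mem_nhds hp)
      (fun q hq => (hdiff hKU q hq).hasFDerivAt)
  have hclair : fderiv ℝ ft (t, r) (0, 1) = fderiv ℝ f1 (t, r) (1, 0) := by
    have e1 : fderiv ℝ ft (t, r) = (ContinuousLinearMap.apply ℝ ℝ ((1:ℝ), (0:ℝ))).comp
        (fderiv ℝ (fun p => fderiv ℝ F p) (t, r)) := by
      rw [hfte]; exact (happ (1, 0)).fderiv
    have e2 : fderiv ℝ f1 (t, r) = (ContinuousLinearMap.apply ℝ ℝ ((0:ℝ), (1:ℝ))).comp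
        (fderiv ℝ (fun p => fderiv ℝ F p) (t, r)) := by
      rw [hf1e]; exact (happ (0, 1)).fderiv
    rw [e1, e2]
    simpa using hsymm (0, 1) (1, 0)
  -- differentiate the PDE in r
  have hftr : HasDerivAt (fun x => ft (t, x)) (fderiv ℝ ft (t, r) (0, 1)) r :=
    pd_snd (hdiff hft _ hp)
  have hcoth : HasDerivAt (fun x => Real.cosh x / Real.sinh x)
      ((Real.sinh r * Real.sinh r - Real.cosh r * Real.cosh r) / Real.sinh r ^ 2) r :=
    (Real.hasDerivAt_cosh r).div (Real.hasDerivAt_sinh r) hs.ne'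
  have hf2r : HasDerivAt (fun x => f2 (t, x)) (fderiv ℝ f2 (t, r) (0, 1)) r :=
    pd_snd (hdiff hf2 _ hp)
  have hRHS : HasDerivAt
      (fun x => f2 (t, x) + ((n : ℝ) - 1) * (Real.cosh x / Real.sinh x) * f1 (t, x))
      (fderiv ℝ f2 (t, r) (0, 1) +
        (((n : ℝ) - 1) * ((Real.sinh r * Real.sinh r - Real.cosh r * Real.cosh r) /
          Real.sinh r ^ 2) * f1 (t, r) +
         ((n : ℝ) - 1) * (Real.cosh r / Real.sinh r) * f2 (t, r))) r := by
    have h := ((hcoth.const_mul ((n:ℝ) - 1)).mul (hf1snd r hr))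
    have h2 := hf2r.add h
    exact h2
  have hE : fderiv ℝ f1 (t, r) (1, 0) =
      fderiv ℝ f2 (t, r) (0, 1) +
        (((n : ℝ) - 1) * ((Real.sinh r * Real.sinh r - Real.cosh r * Real.cosh r) /
          Real.sinh r ^ 2) * f1 (t, r) +
         ((n : ℝ) - 1) * (Real.cosh r / Real.sinh r) * f2 (t, r)) := by
    rw [← hclair, ← hftr.deriv]
    have hev : (fun x => ft (t, x)) =ᶠ[nhds r]
        (fun x => f2 (t, x) + ((n : ℝ) - 1) * (Real.cosh x / Real.sinh x) * f1 (t, x)) :=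
      Filter.eventually_of_mem (Ioi_mem_nhds hr) (fun x hx => hPDE x hx)
    rw [hev.deriv_eq, hRHS.deriv]
  -- time derivative of v
  have hf1t : HasDerivAt (fun τ => f1 (τ, r)) (fderiv ℝ f1 (t, r) (1, 0)) t :=
    pd_fst (hdiff hf1 _ hp)
  have hexp : HasDerivAt (fun τ => Real.exp (-(n:ℝ) * τ))
      (Real.exp (-(n:ℝ) * t) * (-(n:ℝ))) t := by
    have h := ((hasDerivAt_id t).const_mul (-(n:ℝ))).exp
    simpa using h
  have hcfun : HasDerivAt (fun τ => -(Real.exp (-(n:ℝ) * τ) / (2 * π * Real.sinh r)))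
      (-(Real.exp (-(n:ℝ) * t) * (-(n:ℝ)) / (2 * π * Real.sinh r))) t :=
    (hexp.div_const _).neg
  have hvt : deriv (fun τ => v τ r) t =
      -(Real.exp (-(n:ℝ) * t) * (-(n:ℝ)) / (2 * π * Real.sinh r)) * f1 (t, r) +
      -(Real.exp (-(n:ℝ) * t) / (2 * π * Real.sinh r)) * fderiv ℝ f1 (t, r) (1, 0) := by
    have hev : (fun τ => v τ r) =ᶠ[nhds t]
        (fun τ => -(Real.exp (-(n:ℝ) * τ) / (2 * π * Real.sinh r)) * f1 (τ, r)) := by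
      refine Filter.eventually_of_mem (Ioi_mem_nhds ht) (fun τ hτ => ?_)
      show v τ r = _
      rw [hv τ r, h1 τ hτ r hr]
    rw [hev.deriv_eq]
    exact (hcfun.mul hf1t).deriv
  -- radial derivative of v, on all of Ioi 0
  have hW : ∀ x ∈ Ioi (0:ℝ), HasDerivAt (fun y => v t y)
      (Real.exp (-(n:ℝ) * t) / (2 * π) *
        (Real.cosh x * f1 (t, x) - Real.sinh x * f2 (t, x)) / Real.sinh x ^ 2) x := by
    intro x hx
    have hsx : 0 < Real.sinh x := Real.sinh_pos_iff.2 hx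
    have hden : HasDerivAt (fun y => 2 * π * Real.sinh y) (2 * π * Real.cosh x) x :=
      (Real.hasDerivAt_sinh x).const_mul (2 * π)
    have hq : HasDerivAt (fun y => Real.exp (-(n:ℝ) * t) / (2 * π * Real.sinh y))
        ((0 * (2 * π * Real.sinh x) - Real.exp (-(n:ℝ) * t) * (2 * π * Real.cosh x)) /
          (2 * π * Real.sinh x) ^ 2) x :=
      (hasDerivAt_const x _).div hden (mul_pos hπ hsx).ne'
    have hmain := (hq.neg).mul (hf1snd x hx)
    have hev : (fun y => v t y) =ᶠ[nhds x]
        (fun y => -(Real.exp (-(n:ℝ) * t) / (2 * π * Real.sinh y)) * f1 (t, y)) := by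
      refine Filter.eventually_of_mem (Ioi_mem_nhds hx) (fun y hy => ?_)
      show v t y = _
      rw [hv t y, h1 t ht y hy]
    have hres := hmain.congr_of_eventuallyEq hev
    refine hres.congr_deriv ?_
    have : Real.sinh x ≠ 0 := hsx.ne'
    have hπ' : π ≠ 0 := Real.pi_ne_zero
    simp only [Pi.neg_apply]
    field_simp
    ring
  -- second radial derivative
  have hWev : (fun x => deriv (fun y => v t y) x) =ᶠ[nhds r] (fun x =>
      Real.exp (-(n:ℝ) * t) / (2 * π) *
        (Real.cosh x * f1 (t, x) - Real.sinh x * f2 (t, x)) / Real.sinh x ^ 2) :=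
    Filter.eventually_of_mem (Ioi_mem_nhds hr) (fun x hx => (hW x hx).deriv)
  have hnum : HasDerivAt (fun x => Real.exp (-(n:ℝ) * t) / (2 * π) *
      (Real.cosh x * f1 (t, x) - Real.sinh x * f2 (t, x)))
      (Real.exp (-(n:ℝ) * t) / (2 * π) *
        ((Real.sinh r * f1 (t, r) + Real.cosh r * f2 (t, r)) -
         (Real.cosh r * f2 (t, r) + Real.sinh r * fderiv ℝ f2 (t, r) (0, 1)))) r :=
    (((Real.hasDerivAt_cosh r).mul (hf1snd r hr)).sub
      ((Real.hasDerivAt_sinh r).mul hf2r)).const_mul _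
  have hden2 := (Real.hasDerivAt_sinh r).pow 2
  have hWr := hnum.div hden2 (pow_ne_zero 2 hs.ne')
  rw [hvt, hWev.deriv_eq, (show deriv (fun x => Real.exp (-(n:ℝ) * t) / (2 * π) *
      (Real.cosh x * f1 (t, x) - Real.sinh x * f2 (t, x)) / Real.sinh x ^ 2) r = _ from hWr.deriv),
    (hW r hr).deriv, hE]
  have hch : Real.cosh r ^ 2 = Real.sinh r ^ 2 + 1 := Real.cosh_sq r
  have hπ' : π ≠ 0 := Real.pi_ne_zero
  have hsne : Real.sinh r ≠ 0 := hs.ne'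
  simp only [Pi.pow_apply]
  field_simp
  ring_nf
end

section
/- Let n be a positive integer and let κ : (0,∞) × (0,π) → ℝ be a smooth function satisfying the n-dimensional spherical radial heat equation ∂_t κ = ∂_r² κ + (n−1) cot(r) ∂_r κ for all t > 0 and r ∈ (0,π). Define v(t,r) = −(e^{nt}/(2π sin r)) ∂_r κ(t,r). Then v satisfies the (n+2)-dimensional spherical radial heat equation: ∂_t v = ∂_r² v + (n+1) cot(r) ∂_r v for all t > 0 and r ∈ (0,π). -/
open Real Set

lemma slice_r {F : ℝ × ℝ → ℝ} {t r : ℝ} (hF : DifferentiableAt ℝ F (t, r)) :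
    HasDerivAt (fun y => F (t, y)) (fderiv ℝ F (t, r) (0, 1)) r := by
  have h1 : HasDerivAt (fun y : ℝ => ((t, y) : ℝ × ℝ)) (((0 : ℝ), (1 : ℝ)) : ℝ × ℝ) r :=
    (hasDerivAt_const r t).prodMk (hasDerivAt_id r)
  exact hF.hasFDerivAt.comp_hasDerivAt r h1

lemma slice_t {F : ℝ × ℝ → ℝ} {t r : ℝ} (hF : DifferentiableAt ℝ F (t, r)) :
    HasDerivAt (fun τ => F (τ, r)) (fderiv ℝ F (t, r) (1, 0)) t := by
  have h1 : HasDerivAt (fun τ : ℝ => ((τ, r) : ℝ × ℝ)) (((1 : ℝ), (0 : ℝ)) : ℝ × ℝ) t :=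
    (hasDerivAt_id t).prodMk (hasDerivAt_const t r)
  exact hF.hasFDerivAt.comp_hasDerivAt t h1

lemma contDiffOn_fderiv_apply {F : ℝ × ℝ → ℝ} {S : Set (ℝ × ℝ)} (hS : IsOpen S)
    (hF : ContDiffOn ℝ (⊤ : ℕ∞) F S) (w : ℝ × ℝ) :
    ContDiffOn ℝ (⊤ : ℕ∞) (fun p => fderiv ℝ F p w) S :=
  (hF.fderiv_of_isOpen hS (by simp)).clm_apply contDiffOn_const

lemma diffAt_of_contDiffOn {F : ℝ × ℝ → ℝ} {S : Set (ℝ × ℝ)} (hS : IsOpen S)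
    (hF : ContDiffOn ℝ (⊤ : ℕ∞) F S) {p : ℝ × ℝ} (hp : p ∈ S) : DifferentiableAt ℝ F p :=
  ((hF p hp).contDiffAt (hS.mem_nhds hp)).differentiableAt (by simp)

lemma fderiv_apply_swap {F : ℝ × ℝ → ℝ} {S : Set (ℝ × ℝ)} (hS : IsOpen S)
    (hF : ContDiffOn ℝ (⊤ : ℕ∞) F S) {p : ℝ × ℝ} (hp : p ∈ S) (v w : ℝ × ℝ) :
    fderiv ℝ (fun q => fderiv ℝ F q w) p v = fderiv ℝ (fderiv ℝ F) p v w := by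
  have hA : DifferentiableAt ℝ (fderiv ℝ F) p :=
    (((hF.fderiv_of_isOpen hS (m := (⊤ : ℕ∞)) (by simp)) p hp).contDiffAt (hS.mem_nhds hp)).differentiableAt (by simp)
  have h := (hA.hasFDerivAt.clm_apply (hasFDerivAt_const w p)).fderiv
  rw [h]; simp

lemma clairaut {F : ℝ × ℝ → ℝ} {S : Set (ℝ × ℝ)} (hS : IsOpen S)
    (hF : ContDiffOn ℝ (⊤ : ℕ∞) F S) {p : ℝ × ℝ} (hp : p ∈ S) (v w : ℝ × ℝ) :
    fderiv ℝ (fun q => fderiv ℝ F q w) p v = fderiv ℝ (fun q => fderiv ℝ F q v) p w := by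
  rw [fderiv_apply_swap hS hF hp v w, fderiv_apply_swap hS hF hp w v]
  exact ((hF p hp).contDiffAt (hS.mem_nhds hp)).isSymmSndFDerivAt (by rw [minSmoothness_of_isRCLikeNormedField]; exact WithTop.coe_le_coe.mpr le_top) v w

/-- If `κ` satisfies the `n`-dimensional spherical radial heat equation, then
`v(t,r) = -(e^{nt}/(2π sin r)) ∂_r κ(t,r)` satisfies the `(n+2)`-dimensional one. -/
theorem spherical_heat_recurrence_step (n : ℕ) (hn : 0 < n) (κ v : ℝ → ℝ → ℝ)
    (hκ : ContDiffOn ℝ (⊤ : ℕ∞) (fun p : ℝ × ℝ => κ p.1 p.2) (Set.Ioi 0 ×ˢ Set.Ioo 0 π))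
    (heq : ∀ t ∈ Set.Ioi (0 : ℝ), ∀ r ∈ Set.Ioo (0 : ℝ) π,
      deriv (fun τ => κ τ r) t =
        deriv (fun x => deriv (fun y => κ t y) x) r +
          ((n : ℝ) - 1) * (Real.cos r / Real.sin r) * deriv (fun x => κ t x) r)
    (hv : ∀ t r : ℝ, v t r =
      -(Real.exp ((n : ℝ) * t) / (2 * π * Real.sin r)) * deriv (fun x => κ t x) r) :
    ∀ t ∈ Set.Ioi (0 : ℝ), ∀ r ∈ Set.Ioo (0 : ℝ) π,
      deriv (fun τ => v τ r) t =
        deriv (fun x => deriv (fun y => v t y) x) r +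
          ((n : ℝ) + 1) * (Real.cos r / Real.sin r) * deriv (fun x => v t x) r := by
  intro t ht r hr
  set S : Set (ℝ × ℝ) := Set.Ioi 0 ×ˢ Set.Ioo 0 π with hSdef
  have hSo : IsOpen S := isOpen_Ioi.prod isOpen_Ioo
  set f : ℝ × ℝ → ℝ := fun p => κ p.1 p.2 with hfdef
  have hpS : ((t, r) : ℝ × ℝ) ∈ S := ⟨ht, hr⟩
  set g : ℝ × ℝ → ℝ := fun p => fderiv ℝ f p (0, 1) with hgdef
  have hgS : ContDiffOn ℝ (⊤ : ℕ∞) g S := contDiffOn_fderiv_apply hSo hκ _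
  set g2 : ℝ × ℝ → ℝ := fun p => fderiv ℝ g p (0, 1) with hg2def
  have hg2S : ContDiffOn ℝ (⊤ : ℕ∞) g2 S := contDiffOn_fderiv_apply hSo hgS _
  set h : ℝ × ℝ → ℝ := fun p => fderiv ℝ f p (1, 0) with hhdef
  have hhS : ContDiffOn ℝ (⊤ : ℕ∞) h S := contDiffOn_fderiv_apply hSo hκ _
  have hs : 0 < Real.sin r := Real.sin_pos_of_pos_of_lt_pi hr.1 hr.2
  have hπ : (0:ℝ) < π := Real.pi_pos
  set a := g (t, r) with hadef
  set b := g2 (t, r) with hbdef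
  set d := fderiv ℝ g2 (t, r) (0, 1) with hddef
  set e := fderiv ℝ g (t, r) (1, 0) with hedef
  have hGd : HasDerivAt (fun x => g (t, x)) b r := slice_r (diffAt_of_contDiffOn hSo hgS hpS)
  have hG2d : HasDerivAt (fun x => g2 (t, x)) d r := slice_r (diffAt_of_contDiffOn hSo hg2S hpS)
  have hGt : HasDerivAt (fun τ => g (τ, r)) e t := slice_t (diffAt_of_contDiffOn hSo hgS hpS)
  -- slice identities for κ
  have hU : ∀ t' ∈ Set.Ioi (0:ℝ), ∀ x ∈ Set.Ioo (0:ℝ) π,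
      deriv (fun y => κ t' y) x = g (t', x) := by
    intro t' ht' x hx
    exact (slice_r (diffAt_of_contDiffOn hSo hκ (⟨ht', hx⟩ : ((t',x):ℝ×ℝ) ∈ S))).deriv
  -- heq rewritten in terms of g, g2, h on the slice t
  have heq' : ∀ x ∈ Set.Ioo (0:ℝ) π,
      h (t, x) = g2 (t, x) + ((n : ℝ) - 1) * (Real.cos x / Real.sin x) * g (t, x) := by
    intro x hx
    have hxS : ((t, x) : ℝ × ℝ) ∈ S := ⟨ht, hx⟩
    have h1 := heq t ht x hx
    have hL : deriv (fun τ => κ τ x) t = h (t, x) :=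
      (slice_t (diffAt_of_contDiffOn hSo hκ hxS)).deriv
    have hev : (fun x' => deriv (fun y => κ t y) x') =ᶠ[nhds x] (fun x' => g (t, x')) := by
      filter_upwards [Ioo_mem_nhds hx.1 hx.2] with y hy using hU t ht y hy
    have hM : deriv (fun x' => deriv (fun y => κ t y) x') x = g2 (t, x) := by
      rw [hev.deriv_eq]
      exact (slice_r (diffAt_of_contDiffOn hSo hgS hxS)).deriv
    rw [hL, hM, hU t ht x hx] at h1
    exact h1
  -- differentiate heq' at r
  have hE : fderiv ℝ h (t, r) (0, 1)
      = d + ((n : ℝ) - 1) * ((-(1/Real.sin r^2)) * a + (Real.cos r/Real.sin r) * b) := by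
    have hEd : HasDerivAt (fun x => h (t, x)) (fderiv ℝ h (t, r) (0, 1)) r :=
      slice_r (diffAt_of_contDiffOn hSo hhS hpS)
    have hcot : HasDerivAt (fun x => Real.cos x / Real.sin x) (-(1/Real.sin r^2)) r := by
      have h0 := (Real.hasDerivAt_cos r).fun_div (Real.hasDerivAt_sin r) hs.ne'
      convert h0 using 1
      · rfl
      · rfl
      have htr := Real.sin_sq_add_cos_sq r
      field_simp
      linear_combination htr
    have hRHS : HasDerivAt
        (fun x => g2 (t, x) + ((n : ℝ) - 1) * (Real.cos x / Real.sin x) * g (t, x))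
        (d + ((n : ℝ) - 1) * ((-(1/Real.sin r^2)) * a + (Real.cos r/Real.sin r) * b)) r := by
      have h2 : HasDerivAt (fun x => ((n : ℝ) - 1) * (Real.cos x / Real.sin x) * g (t, x))
          (((n : ℝ) - 1) * (-(1/Real.sin r^2)) * a
            + ((n : ℝ) - 1) * (Real.cos r/Real.sin r) * b) r := by
        have := ((hcot.const_mul ((n:ℝ) - 1)).fun_mul hGd)
        convert this using 1
      have := hG2d.fun_add h2
      convert this using 1
      · rfl
      · rfl
      ring
    have hev : (fun x => h (t, x)) =ᶠ[nhds r]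
        (fun x => g2 (t, x) + ((n : ℝ) - 1) * (Real.cos x / Real.sin x) * g (t, x)) := by
      filter_upwards [Ioo_mem_nhds hr.1 hr.2] with x hx using heq' x hx
    exact hEd.unique (hRHS.congr_of_eventuallyEq hev)
  have hce : e = fderiv ℝ h (t, r) (0, 1) := clairaut hSo hκ hpS (1, 0) (0, 1)
  have hee : e = d + ((n : ℝ) - 1) * ((-(1/Real.sin r^2)) * a + (Real.cos r/Real.sin r) * b) :=
    hce.trans hE
  -- time derivative of v
  have hLHS : deriv (fun τ => v τ r) t
      = -((n:ℝ) * Real.exp ((n:ℝ)*t)/(2*π*Real.sin r)) * a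
        - (Real.exp ((n:ℝ)*t)/(2*π*Real.sin r)) * e := by
    have hev : (fun τ => v τ r) =ᶠ[nhds t]
        (fun τ => -(Real.exp ((n:ℝ)*τ)/(2*π*Real.sin r)) * g (τ, r)) := by
      filter_upwards [Ioi_mem_nhds ht] with τ hτ
      rw [hv τ r, hU τ hτ r hr]
    rw [hev.deriv_eq]
    have h1 : HasDerivAt (fun τ => -(Real.exp ((n:ℝ)*τ)/(2*π*Real.sin r)))
        (-((n:ℝ) * Real.exp ((n:ℝ)*t)/(2*π*Real.sin r))) t := by
      have h0 : HasDerivAt (fun τ : ℝ => (n:ℝ)*τ) ((n:ℝ)) t := by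
        simpa using (hasDerivAt_id t).const_mul (n:ℝ)
      have := ((h0.exp).div_const (2*π*Real.sin r)).fun_neg
      convert this using 1
      · rfl
      · rfl
      ring
    rw [(h1.fun_mul hGt).deriv]
    ring
  -- first space derivative of v, on the whole slice
  have hVr : ∀ x ∈ Set.Ioo (0:ℝ) π, deriv (fun y => v t y) x =
      Real.exp ((n:ℝ)*t)/(2*π) * (Real.cos x / Real.sin x^2) * g (t,x)
        - Real.exp ((n:ℝ)*t)/(2*π*Real.sin x) * g2 (t,x) := by
    intro x hx
    have hxS : ((t,x):ℝ×ℝ) ∈ S := ⟨ht, hx⟩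
    have hsx : 0 < Real.sin x := Real.sin_pos_of_pos_of_lt_pi hx.1 hx.2
    have hev : (fun y => v t y) =ᶠ[nhds x]
        (fun y => -(Real.exp ((n:ℝ)*t)/(2*π*Real.sin y)) * g (t, y)) := by
      filter_upwards [Ioo_mem_nhds hx.1 hx.2] with y hy
      rw [hv t y, hU t ht y hy]
    rw [hev.deriv_eq]
    have hA : HasDerivAt (fun y => -(Real.exp ((n:ℝ)*t)/(2*π*Real.sin y)))
        (Real.exp ((n:ℝ)*t)/(2*π) * (Real.cos x / Real.sin x^2)) x := by
      have := ((hasDerivAt_const x (Real.exp ((n:ℝ)*t))).fun_div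
        ((Real.hasDerivAt_sin x).const_mul (2*π)) (by positivity)).fun_neg
      convert this using 1
      · rfl
      · rfl
      field_simp
      ring
    have hGx : HasDerivAt (fun y => g (t, y)) (g2 (t, x)) x :=
      slice_r (diffAt_of_contDiffOn hSo hgS hxS)
    rw [(hA.fun_mul hGx).deriv]
    ring
  -- second space derivative of v
  have hq : HasDerivAt (fun x => Real.cos x / Real.sin x^2)
      ((-(Real.sin r^2) - 2*Real.cos r^2)/Real.sin r^3) r := by
    have := (Real.hasDerivAt_cos r).fun_div ((Real.hasDerivAt_sin r).fun_pow 2) (by positivity)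
    convert this using 1
    · rfl
    · rfl
    field_simp
    ring
  have hB : HasDerivAt (fun x => Real.exp ((n:ℝ)*t)/(2*π*Real.sin x))
      (-(Real.exp ((n:ℝ)*t) * Real.cos r/(2*π*Real.sin r^2))) r := by
    have := (hasDerivAt_const r (Real.exp ((n:ℝ)*t))).fun_div
      ((Real.hasDerivAt_sin r).const_mul (2*π)) (by positivity)
    convert this using 1
    · rfl
    · rfl
    field_simp
    ring
  have hW : HasDerivAt (fun x => Real.exp ((n:ℝ)*t)/(2*π) * (Real.cos x / Real.sin x^2) * g (t,x)
        - Real.exp ((n:ℝ)*t)/(2*π*Real.sin x) * g2 (t,x))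
      (Real.exp ((n:ℝ)*t)/(2*π) * ((-(Real.sin r^2) - 2*Real.cos r^2)/Real.sin r^3) * a
        + Real.exp ((n:ℝ)*t)/(2*π) * (Real.cos r / Real.sin r^2) * b
        - (-(Real.exp ((n:ℝ)*t) * Real.cos r/(2*π*Real.sin r^2)) * b
            + Real.exp ((n:ℝ)*t)/(2*π*Real.sin r) * d)) r := by
    have h1 := ((hq.const_mul (Real.exp ((n:ℝ)*t)/(2*π))).fun_mul hGd)
    have h2 := hB.fun_mul hG2d
    exact h1.fun_sub h2
  have hIEv : (fun x => deriv (fun y => v t y) x) =ᶠ[nhds r]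
      (fun x => Real.exp ((n:ℝ)*t)/(2*π) * (Real.cos x / Real.sin x^2) * g (t,x)
        - Real.exp ((n:ℝ)*t)/(2*π*Real.sin x) * g2 (t,x)) := by
    filter_upwards [Ioo_mem_nhds hr.1 hr.2] with x hx using hVr x hx
  rw [hLHS, hIEv.deriv_eq, hW.deriv, hVr r hr, hee]
  have htr := Real.sin_sq_add_cos_sq r
  have hsne : Real.sin r ≠ 0 := hs.ne'
  field_simp
  linear_combination ((1 - (n:ℝ))*a) * htr
end

section
/- Let n be a positive integer and let u : (0,∞) × (1,∞) → ℝ be a C² function satisfying ∂_t u(t,s) = (s²−1) ∂_s² u(t,s) + (n+1) s ∂_s u(t,s) for all t > 0 and s > 1. For t > 0 and σ > 1 define w(t,σ) = ∫_0^∞ ξ^{-1/2} u(t, σ+ξ) dξ. Assume: (i) for each t > 0 and σ > 1 the functions ξ ↦ ξ^{-1/2} u(t,σ+ξ), ξ^{-1/2} ∂_t u(t,σ+ξ), ξ^{-1/2} ∂_s u(t,σ+ξ), ξ^{-1/2} ∂_s² u(t,σ+ξ), ξ^{1/2} ∂_s u(t,σ+ξ), and ξ^{3/2} ∂_s² u(t,σ+ξ)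 are integrable on (0,∞); (ii) ξ^{1/2} u(t,σ+ξ) → 0 and ξ^{3/2} ∂_s u(t,σ+ξ) → 0 as ξ → ∞; (iii) differentiation under the integral sign is valid for w, i.e. ∂_t w(t,σ) = ∫_0^∞ ξ^{-1/2} ∂_t u(t,σ+ξ) dξ, ∂_σ w(t,σ) = ∫_0^∞ ξ^{-1/2} ∂_s u(t,σ+ξ) dξ, and ∂_σ² w(t,σ) = ∫_0^∞ ξ^{-1/2} ∂_s² u(t,σ+ξ) dξ. Then w satisfies ∂_t w = (σ²−1) ∂_σ² w + n σ ∂_σ w − ((2n−1)/4) w for all t > 0 and σ > 1. -/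
open Real Set MeasureTheory Filter Topology

/-!
Write `I_a[h] = ∫₀^∞ ξ^a h(σ+ξ) dξ`. Expanding `(σ+ξ)² - 1 = (σ² - 1) + 2σξ + ξ²` turns the
transform of the right-hand side of the equation for `u` into a combination of `I_{-1/2}`,
`I_{1/2}` and `I_{3/2}` of `u'` and `u''`. Integration by parts, `I_a[h'] = -a I_{a-1}[h]`,
brings every term down to weight `ξ^{-1/2}`; the boundary terms vanish at `0` because `a > 0`
and at `∞` by the decay hypotheses. Collecting coefficients gives the equation for `w`.
-/

theorem integral_Ioi_rpow_mul_of_hasDerivAt {a b : ℝ} (ha : 0 < a) (hab : a - 1 = b)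
    {φ φ' : ℝ → ℝ} (hφ0 : ContinuousWithinAt φ (Ici 0) 0)
    (hφ : ∀ ξ ∈ Ioi (0 : ℝ), HasDerivAt φ (φ' ξ) ξ)
    (hint : IntegrableOn (fun ξ => ξ ^ b * φ ξ) (Ioi 0))
    (hint' : IntegrableOn (fun ξ => ξ ^ a * φ' ξ) (Ioi 0))
    (hdecay : Tendsto (fun ξ => ξ ^ a * φ ξ) atTop (𝓝 0)) :
    ∫ ξ in Ioi 0, ξ ^ a * φ' ξ = -a * ∫ ξ in Ioi 0, ξ ^ b * φ ξ := by
  subst hab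
  have hderiv : ∀ ξ ∈ Ioi (0 : ℝ), HasDerivAt (fun ξ => ξ ^ a * φ ξ)
      (a * (ξ ^ (a - 1) * φ ξ) + ξ ^ a * φ' ξ) ξ := fun ξ hξ =>
    ((hasDerivAt_rpow_const (Or.inl (ne_of_gt hξ))).mul (hφ ξ hξ)).congr_deriv (by ring)
  have hcont : ContinuousWithinAt (fun ξ => ξ ^ a * φ ξ) (Ici 0) 0 :=
    (continuousAt_rpow_const 0 a (Or.inr ha.le)).continuousWithinAt.mul hφ0
  have key := integral_Ioi_of_hasDerivAt_of_tendsto hcont hderiv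
    ((hint.const_mul a).add hint') hdecay
  rw [integral_add (hint.const_mul a) hint', integral_const_mul, zero_rpow ha.ne', zero_mul,
    sub_zero] at key
  linarith

theorem MeasureTheory.IntegrableOn.rpow_mul_of_le_of_le {a b c : ℝ} {f : ℝ → ℝ} (hab : a ≤ b) (hbc : b ≤ c)
    (ha : IntegrableOn (fun ξ => ξ ^ a * f ξ) (Ioi 0))
    (hc : IntegrableOn (fun ξ => ξ ^ c * f ξ) (Ioi 0)) :
    IntegrableOn (fun ξ => ξ ^ b * f ξ) (Ioi 0) := by
  have hmeas : AEStronglyMeasurable (fun ξ => ξ ^ b * f ξ) (volume.restrict (Ioi 0)) := by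
    have hpow : ContinuousOn (fun ξ : ℝ => ξ ^ (b - a)) (Ioi 0) := fun ξ hξ =>
      (continuousAt_rpow_const ξ _ (Or.inl (ne_of_gt hξ))).continuousWithinAt
    refine ((hpow.aestronglyMeasurable measurableSet_Ioi).mul ha.aestronglyMeasurable).congr ?_
    filter_upwards [ae_restrict_mem measurableSet_Ioi] with ξ hξ
    simp only [Pi.mul_apply]
    rw [← mul_assoc, ← rpow_add hξ, sub_add_cancel]
  refine (ha.norm.add hc.norm).mono' hmeas ?_
  filter_upwards [ae_restrict_mem measurableSet_Ioi] with ξ hξ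
  have hle : ξ ^ b ≤ ξ ^ a + ξ ^ c := by
    rcases le_total ξ 1 with h | h
    · linarith [rpow_le_rpow_of_exponent_ge hξ h hab, rpow_nonneg hξ.le c]
    · linarith [rpow_le_rpow_of_exponent_le h hbc, rpow_nonneg (le_of_lt hξ) a]
  simp only [Pi.add_apply, norm_mul, norm_eq_abs, abs_of_pos (rpow_pos_of_pos hξ _), ← add_mul]
  exact mul_le_mul_of_nonneg_right hle (abs_nonneg _)

theorem Filter.Tendsto.rpow_mul_of_lt {a b : ℝ} (hab : a < b) {f : ℝ → ℝ}
    (hf : Tendsto (fun ξ => ξ ^ b * f ξ) atTop (𝓝 0)) :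
    Tendsto (fun ξ => ξ ^ a * f ξ) atTop (𝓝 0) := by
  have h := (tendsto_rpow_neg_atTop (sub_pos.2 hab)).mul hf
  rw [zero_mul] at h
  refine h.congr' ?_
  filter_upwards [eventually_gt_atTop 0] with ξ hξ
  rw [← mul_assoc, ← rpow_add hξ, neg_sub, sub_add_cancel]

/-- The radial Laplacian of `ℍ^ν` in the variable `s = cosh r`. -/
noncomputable def radialLaplacian (ν : ℝ) (g : ℝ → ℝ) (s : ℝ) : ℝ :=
  (s ^ 2 - 1) * deriv (deriv g) s + ν * s * deriv g s

section ShiftedTransform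

variable {g : ℝ → ℝ} {c σ : ℝ}

theorem integral_Ioi_rpow_mul_deriv_comp_add {a b : ℝ} (ha : 0 < a) (hab : a - 1 = b)
    (hg : ContDiffOn ℝ 1 g (Ioi c)) (hσ : c < σ)
    (hint : IntegrableOn (fun ξ => ξ ^ b * g (σ + ξ)) (Ioi 0))
    (hint' : IntegrableOn (fun ξ => ξ ^ a * deriv g (σ + ξ)) (Ioi 0))
    (hdecay : Tendsto (fun ξ => ξ ^ a * g (σ + ξ)) atTop (𝓝 0)) :
    ∫ ξ in Ioi 0, ξ ^ a * deriv g (σ + ξ) = -a * ∫ ξ in Ioi 0, ξ ^ b * g (σ + ξ) := by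
  have hcont : ContinuousWithinAt (fun ζ => g (σ + ζ)) (Ici 0) 0 := by
    have hgσ : ContinuousAt g (σ + 0) := by
      rw [add_zero]; exact hg.continuousOn.continuousAt (isOpen_Ioi.mem_nhds hσ)
    exact (hgσ.comp (continuous_const_add σ).continuousAt).continuousWithinAt
  refine integral_Ioi_rpow_mul_of_hasDerivAt ha hab hcont (fun ξ hξ => ?_) hint hint' hdecay
  have hξ : σ + ξ ∈ Ioi c := by simp only [mem_Ioi] at hξ ⊢; linarith
  exact (((hg.contDiffAt (isOpen_Ioi.mem_nhds hξ)).differentiableAt one_ne_zero).hasDerivAt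
    ).comp_const_add σ ξ

theorem integral_rpow_neg_half_mul_radialLaplacian_comp_add_eq_sum (ν : ℝ)
    (h₄ : IntegrableOn (fun ξ => ξ ^ (-(1 : ℝ) / 2) * deriv (deriv g) (σ + ξ)) (Ioi 0))
    (h₄' : IntegrableOn (fun ξ => ξ ^ ((1 : ℝ) / 2) * deriv (deriv g) (σ + ξ)) (Ioi 0))
    (h₆ : IntegrableOn (fun ξ => ξ ^ ((3 : ℝ) / 2) * deriv (deriv g) (σ + ξ)) (Ioi 0))
    (h₃ : IntegrableOn (fun ξ => ξ ^ (-(1 : ℝ) / 2) * deriv g (σ + ξ)) (Ioi 0))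
    (h₅ : IntegrableOn (fun ξ => ξ ^ ((1 : ℝ) / 2) * deriv g (σ + ξ)) (Ioi 0)) :
    ∫ ξ in Ioi 0, ξ ^ (-(1 : ℝ) / 2) * radialLaplacian ν g (σ + ξ) =
      (σ ^ 2 - 1) * (∫ ξ in Ioi 0, ξ ^ (-(1 : ℝ) / 2) * deriv (deriv g) (σ + ξ)) +
      2 * σ * (∫ ξ in Ioi 0, ξ ^ ((1 : ℝ) / 2) * deriv (deriv g) (σ + ξ)) +
      (∫ ξ in Ioi 0, ξ ^ ((3 : ℝ) / 2) * deriv (deriv g) (σ + ξ)) +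
      ν * σ * (∫ ξ in Ioi 0, ξ ^ (-(1 : ℝ) / 2) * deriv g (σ + ξ)) +
      ν * (∫ ξ in Ioi 0, ξ ^ ((1 : ℝ) / 2) * deriv g (σ + ξ)) := by
  have hexpand : EqOn (fun ξ => ξ ^ (-(1 : ℝ) / 2) * radialLaplacian ν g (σ + ξ))
      (fun ξ => (σ ^ 2 - 1) * (ξ ^ (-(1 : ℝ) / 2) * deriv (deriv g) (σ + ξ)) +
        2 * σ * (ξ ^ ((1 : ℝ) / 2) * deriv (deriv g) (σ + ξ)) +
        ξ ^ ((3 : ℝ) / 2) * deriv (deriv g) (σ + ξ) +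
        ν * σ * (ξ ^ (-(1 : ℝ) / 2) * deriv g (σ + ξ)) +
        ν * (ξ ^ ((1 : ℝ) / 2) * deriv g (σ + ξ))) (Ioi 0) := fun ξ hξ => by
    have hhalf : ξ ^ ((1 : ℝ) / 2) = ξ * ξ ^ (-(1 : ℝ) / 2) := by
      rw [← rpow_one_add' (le_of_lt hξ) (by norm_num)]; norm_num
    have hthreehalf : ξ ^ ((3 : ℝ) / 2) = ξ ^ 2 * ξ ^ (-(1 : ℝ) / 2) := by
      rw [← rpow_natCast, ← rpow_add hξ]; norm_num
    simp only [radialLaplacian, hhalf, hthreehalf]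
    ring
  have i₁ := h₄.const_mul (σ ^ 2 - 1)
  have i₂ := h₄'.const_mul (2 * σ)
  have i₄ := h₃.const_mul (ν * σ)
  have i₅ := h₅.const_mul ν
  rw [setIntegral_congr_fun measurableSet_Ioi hexpand, integral_add, integral_add, integral_add,
    integral_add, integral_const_mul, integral_const_mul, integral_const_mul, integral_const_mul]
  exacts [i₁, i₂, i₁.add i₂, h₆, (i₁.add i₂).add h₆, i₄, ((i₁.add i₂).add h₆).add i₄, i₅]

theorem integral_rpow_neg_half_mul_radialLaplacian_comp_add (ν : ℝ)
    (hg : ContDiffOn ℝ 2 g (Ioi c)) (hσ : c < σ)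
    (h₁ : IntegrableOn (fun ξ => ξ ^ (-(1 : ℝ) / 2) * g (σ + ξ)) (Ioi 0))
    (h₃ : IntegrableOn (fun ξ => ξ ^ (-(1 : ℝ) / 2) * deriv g (σ + ξ)) (Ioi 0))
    (h₄ : IntegrableOn (fun ξ => ξ ^ (-(1 : ℝ) / 2) * deriv (deriv g) (σ + ξ)) (Ioi 0))
    (h₅ : IntegrableOn (fun ξ => ξ ^ ((1 : ℝ) / 2) * deriv g (σ + ξ)) (Ioi 0))
    (h₆ : IntegrableOn (fun ξ => ξ ^ ((3 : ℝ) / 2) * deriv (deriv g) (σ + ξ)) (Ioi 0))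
    (hdecay₁ : Tendsto (fun ξ => ξ ^ ((1 : ℝ) / 2) * g (σ + ξ)) atTop (𝓝 0))
    (hdecay₂ : Tendsto (fun ξ => ξ ^ ((3 : ℝ) / 2) * deriv g (σ + ξ)) atTop (𝓝 0)) :
    ∫ ξ in Ioi 0, ξ ^ (-(1 : ℝ) / 2) * radialLaplacian ν g (σ + ξ) =
      (σ ^ 2 - 1) * (∫ ξ in Ioi 0, ξ ^ (-(1 : ℝ) / 2) * deriv (deriv g) (σ + ξ)) +
      (ν - 1) * σ * (∫ ξ in Ioi 0, ξ ^ (-(1 : ℝ) / 2) * deriv g (σ + ξ)) -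
      (2 * ν - 3) / 4 * ∫ ξ in Ioi 0, ξ ^ (-(1 : ℝ) / 2) * g (σ + ξ) := by
  have hg₁ : ContDiffOn ℝ 1 g (Ioi c) := hg.of_le (by norm_num)
  have hg' : ContDiffOn ℝ 1 (deriv g) (Ioi c) := hg.deriv_of_isOpen isOpen_Ioi (by norm_num)
  have h₄' : IntegrableOn (fun ξ => ξ ^ ((1 : ℝ) / 2) * deriv (deriv g) (σ + ξ)) (Ioi 0) :=
    h₄.rpow_mul_of_le_of_le (by norm_num) (by norm_num) h₆
  have hdecay₂' : Tendsto (fun ξ => ξ ^ ((1 : ℝ) / 2) * deriv g (σ + ξ)) atTop (𝓝 0) :=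
    hdecay₂.rpow_mul_of_lt (by norm_num)
  rw [integral_rpow_neg_half_mul_radialLaplacian_comp_add_eq_sum ν h₄ h₄' h₆ h₃ h₅,
    integral_Ioi_rpow_mul_deriv_comp_add (b := (1 : ℝ) / 2) (by norm_num) (by norm_num) hg' hσ
      h₅ h₆ hdecay₂,
    integral_Ioi_rpow_mul_deriv_comp_add (b := -(1 : ℝ) / 2) (by norm_num) (by norm_num) hg' hσ
      h₃ h₄' hdecay₂',
    integral_Ioi_rpow_mul_deriv_comp_add (b := -(1 : ℝ) / 2) (by norm_num) (by norm_num) hg₁ hσ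
      h₁ h₅ hdecay₁]
  ring

end ShiftedTransform

theorem hyperbolic_integral_transform_heat_equation_general (n : ℕ)
    (u w : ℝ → ℝ → ℝ)
    (hu : ContDiffOn ℝ 2 (fun p : ℝ × ℝ => u p.1 p.2) (Set.Ioi 0 ×ˢ Set.Ioi 1))
    (hueq : ∀ t ∈ Set.Ioi (0 : ℝ), ∀ s ∈ Set.Ioi (1 : ℝ),
      deriv (fun τ => u τ s) t =
        (s ^ 2 - 1) * deriv (fun x => deriv (fun y => u t y) x) s +
          ((n : ℝ) + 1) * s * deriv (fun x => u t x) s)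
    (hw : ∀ t σ : ℝ, w t σ = ∫ ξ in Set.Ioi (0 : ℝ), ξ ^ (-(1 : ℝ) / 2) * u t (σ + ξ))
    -- (i) integrability assumptions
    (hint₁ : ∀ t ∈ Set.Ioi (0 : ℝ), ∀ σ ∈ Set.Ioi (1 : ℝ),
      IntegrableOn (fun ξ : ℝ => ξ ^ (-(1 : ℝ) / 2) * u t (σ + ξ)) (Set.Ioi 0))
    (hint₃ : ∀ t ∈ Set.Ioi (0 : ℝ), ∀ σ ∈ Set.Ioi (1 : ℝ),
      IntegrableOn (fun ξ : ℝ => ξ ^ (-(1 : ℝ) / 2) * deriv (fun x => u t x) (σ + ξ))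
        (Set.Ioi 0))
    (hint₄ : ∀ t ∈ Set.Ioi (0 : ℝ), ∀ σ ∈ Set.Ioi (1 : ℝ),
      IntegrableOn
        (fun ξ : ℝ => ξ ^ (-(1 : ℝ) / 2) * deriv (fun x => deriv (fun y => u t y) x) (σ + ξ))
        (Set.Ioi 0))
    (hint₅ : ∀ t ∈ Set.Ioi (0 : ℝ), ∀ σ ∈ Set.Ioi (1 : ℝ),
      IntegrableOn (fun ξ : ℝ => ξ ^ ((1 : ℝ) / 2) * deriv (fun x => u t x) (σ + ξ))
        (Set.Ioi 0))
    (hint₆ : ∀ t ∈ Set.Ioi (0 : ℝ), ∀ σ ∈ Set.Ioi (1 : ℝ),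
      IntegrableOn
        (fun ξ : ℝ => ξ ^ ((3 : ℝ) / 2) * deriv (fun x => deriv (fun y => u t y) x) (σ + ξ))
        (Set.Ioi 0))
    -- (ii) decay assumptions
    (hdecay₁ : ∀ t ∈ Set.Ioi (0 : ℝ), ∀ σ ∈ Set.Ioi (1 : ℝ),
      Tendsto (fun ξ : ℝ => ξ ^ ((1 : ℝ) / 2) * u t (σ + ξ)) atTop (𝓝 0))
    (hdecay₂ : ∀ t ∈ Set.Ioi (0 : ℝ), ∀ σ ∈ Set.Ioi (1 : ℝ),
      Tendsto (fun ξ : ℝ => ξ ^ ((3 : ℝ) / 2) * deriv (fun x => u t x) (σ + ξ)) atTop (𝓝 0))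
    -- (iii) differentiation under the integral sign
    (hdiff₁ : ∀ t ∈ Set.Ioi (0 : ℝ), ∀ σ ∈ Set.Ioi (1 : ℝ),
      deriv (fun τ => w τ σ) t =
        ∫ ξ in Set.Ioi (0 : ℝ), ξ ^ (-(1 : ℝ) / 2) * deriv (fun τ => u τ (σ + ξ)) t)
    (hdiff₂ : ∀ t ∈ Set.Ioi (0 : ℝ), ∀ σ ∈ Set.Ioi (1 : ℝ),
      deriv (fun x => w t x) σ =
        ∫ ξ in Set.Ioi (0 : ℝ), ξ ^ (-(1 : ℝ) / 2) * deriv (fun x => u t x) (σ + ξ))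
    (hdiff₃ : ∀ t ∈ Set.Ioi (0 : ℝ), ∀ σ ∈ Set.Ioi (1 : ℝ),
      deriv (fun x => deriv (fun y => w t y) x) σ =
        ∫ ξ in Set.Ioi (0 : ℝ),
          ξ ^ (-(1 : ℝ) / 2) * deriv (fun x => deriv (fun y => u t y) x) (σ + ξ)) :
    ∀ t ∈ Set.Ioi (0 : ℝ), ∀ σ ∈ Set.Ioi (1 : ℝ),
      deriv (fun τ => w τ σ) t =
        (σ ^ 2 - 1) * deriv (fun x => deriv (fun y => w t y) x) σ +
          (n : ℝ) * σ * deriv (fun x => w t x) σ - (2 * (n : ℝ) - 1) / 4 * w t σ := by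
  intro t ht σ hσ
  have hslice : ContDiffOn ℝ 2 (u t) (Ioi 1) :=
    hu.comp (contDiff_prodMk_right t).contDiffOn fun _ hx => mk_mem_prod ht hx
  have hheat : ∫ ξ in Ioi (0 : ℝ), ξ ^ (-(1 : ℝ) / 2) * deriv (fun τ => u τ (σ + ξ)) t =
      ∫ ξ in Ioi (0 : ℝ), ξ ^ (-(1 : ℝ) / 2) * radialLaplacian ((n : ℝ) + 1) (u t) (σ + ξ) :=
    setIntegral_congr_fun measurableSet_Ioi fun ξ hξ => by
      have hs : σ + ξ ∈ Ioi (1 : ℝ) := by simp only [mem_Ioi] at hσ hξ ⊢; linarith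
      rw [hueq t ht (σ + ξ) hs]; rfl
  rw [hdiff₁ t ht σ hσ, hdiff₂ t ht σ hσ, hdiff₃ t ht σ hσ, hw, hheat,
    integral_rpow_neg_half_mul_radialLaplacian_comp_add _ hslice hσ (hint₁ t ht σ hσ)
      (hint₃ t ht σ hσ) (hint₄ t ht σ hσ) (hint₅ t ht σ hσ) (hint₆ t ht σ hσ)
      (hdecay₁ t ht σ hσ) (hdecay₂ t ht σ hσ)]
  ring

/-- Analytic core of the hyperbolic integral recurrence: if `u` satisfies
`∂_t u = (s²-1) ∂_s² u + (n+1) s ∂_s u` on `(0,∞) × (1,∞)`, then under suitable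
integrability, decay and differentiation-under-the-integral assumptions, the transform
`w(t,σ) = ∫_0^∞ ξ^{-1/2} u(t,σ+ξ) dξ` satisfies
`∂_t w = (σ²-1) ∂_σ² w + n σ ∂_σ w - ((2n-1)/4) w`. -/
theorem hyperbolic_integral_transform_heat_equation (n : ℕ) (hn : 0 < n)
    (u w : ℝ → ℝ → ℝ)
    (hu : ContDiffOn ℝ 2 (fun p : ℝ × ℝ => u p.1 p.2) (Set.Ioi 0 ×ˢ Set.Ioi 1))
    (hueq : ∀ t ∈ Set.Ioi (0 : ℝ), ∀ s ∈ Set.Ioi (1 : ℝ),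
      deriv (fun τ => u τ s) t =
        (s ^ 2 - 1) * deriv (fun x => deriv (fun y => u t y) x) s +
          ((n : ℝ) + 1) * s * deriv (fun x => u t x) s)
    (hw : ∀ t σ : ℝ, w t σ = ∫ ξ in Set.Ioi (0 : ℝ), ξ ^ (-(1 : ℝ) / 2) * u t (σ + ξ))
    -- (i) integrability assumptions
    (hint₁ : ∀ t ∈ Set.Ioi (0 : ℝ), ∀ σ ∈ Set.Ioi (1 : ℝ),
      IntegrableOn (fun ξ : ℝ => ξ ^ (-(1 : ℝ) / 2) * u t (σ + ξ)) (Set.Ioi 0))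
    (hint₂ : ∀ t ∈ Set.Ioi (0 : ℝ), ∀ σ ∈ Set.Ioi (1 : ℝ),
      IntegrableOn (fun ξ : ℝ => ξ ^ (-(1 : ℝ) / 2) * deriv (fun τ => u τ (σ + ξ)) t)
        (Set.Ioi 0))
    (hint₃ : ∀ t ∈ Set.Ioi (0 : ℝ), ∀ σ ∈ Set.Ioi (1 : ℝ),
      IntegrableOn (fun ξ : ℝ => ξ ^ (-(1 : ℝ) / 2) * deriv (fun x => u t x) (σ + ξ))
        (Set.Ioi 0))
    (hint₄ : ∀ t ∈ Set.Ioi (0 : ℝ), ∀ σ ∈ Set.Ioi (1 : ℝ),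
      IntegrableOn
        (fun ξ : ℝ => ξ ^ (-(1 : ℝ) / 2) * deriv (fun x => deriv (fun y => u t y) x) (σ + ξ))
        (Set.Ioi 0))
    (hint₅ : ∀ t ∈ Set.Ioi (0 : ℝ), ∀ σ ∈ Set.Ioi (1 : ℝ),
      IntegrableOn (fun ξ : ℝ => ξ ^ ((1 : ℝ) / 2) * deriv (fun x => u t x) (σ + ξ))
        (Set.Ioi 0))
    (hint₆ : ∀ t ∈ Set.Ioi (0 : ℝ), ∀ σ ∈ Set.Ioi (1 : ℝ),
      IntegrableOn
        (fun ξ : ℝ => ξ ^ ((3 : ℝ) / 2) * deriv (fun x => deriv (fun y => u t y) x) (σ + ξ))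
        (Set.Ioi 0))
    -- (ii) decay assumptions
    (hdecay₁ : ∀ t ∈ Set.Ioi (0 : ℝ), ∀ σ ∈ Set.Ioi (1 : ℝ),
      Tendsto (fun ξ : ℝ => ξ ^ ((1 : ℝ) / 2) * u t (σ + ξ)) atTop (𝓝 0))
    (hdecay₂ : ∀ t ∈ Set.Ioi (0 : ℝ), ∀ σ ∈ Set.Ioi (1 : ℝ),
      Tendsto (fun ξ : ℝ => ξ ^ ((3 : ℝ) / 2) * deriv (fun x => u t x) (σ + ξ)) atTop (𝓝 0))
    -- (iii) differentiation under the integral sign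
    (hdiff₁ : ∀ t ∈ Set.Ioi (0 : ℝ), ∀ σ ∈ Set.Ioi (1 : ℝ),
      deriv (fun τ => w τ σ) t =
        ∫ ξ in Set.Ioi (0 : ℝ), ξ ^ (-(1 : ℝ) / 2) * deriv (fun τ => u τ (σ + ξ)) t)
    (hdiff₂ : ∀ t ∈ Set.Ioi (0 : ℝ), ∀ σ ∈ Set.Ioi (1 : ℝ),
      deriv (fun x => w t x) σ =
        ∫ ξ in Set.Ioi (0 : ℝ), ξ ^ (-(1 : ℝ) / 2) * deriv (fun x => u t x) (σ + ξ))
    (hdiff₃ : ∀ t ∈ Set.Ioi (0 : ℝ), ∀ σ ∈ Set.Ioi (1 : ℝ),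
      deriv (fun x => deriv (fun y => w t y) x) σ =
        ∫ ξ in Set.Ioi (0 : ℝ),
          ξ ^ (-(1 : ℝ) / 2) * deriv (fun x => deriv (fun y => u t y) x) (σ + ξ)) :
    ∀ t ∈ Set.Ioi (0 : ℝ), ∀ σ ∈ Set.Ioi (1 : ℝ),
      deriv (fun τ => w τ σ) t =
        (σ ^ 2 - 1) * deriv (fun x => deriv (fun y => w t y) x) σ +
          (n : ℝ) * σ * deriv (fun x => w t x) σ - (2 * (n : ℝ) - 1) / 4 * w t σ :=
  hyperbolic_integral_transform_heat_equation_general n u w hu hueq hw hint₁ hint₃ hint₄ hint₅ hint₆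
    hdecay₁ hdecay₂ hdiff₁ hdiff₂ hdiff₃
end

section
/- Let n be a positive integer and let u : (0,∞) × [−1,1] → ℝ be a function which is continuous, continuously differentiable in t, and twice continuously differentiable in the second variable s up to the boundary, satisfying ∂_t u(t,s) = (1−s²) ∂_s² u(t,s) − (n+1) s ∂_s u(t,s) for all t > 0 and s ∈ [−1,1]. For t > 0 and σ ∈ (−1,1) define w(t,σ) = ∫_0^{1+σ} ξ^{-1/2} u(t, σ−ξ) dξ. Then ∂_t w − (1−σ²) ∂_σ² w + n σ ∂_σ w = ((2n−1)/4) w − (n−1)(1+σ)^{-1/2} u(t,−1) for all t > 0 and σ ∈ (−1,1). -/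
open Real Set MeasureTheory Filter Topology

/-!
Substituting `ξ = (1 + σ) η` turns `w(t, σ)` into
`(1 + σ) ^ (1/2) * ∫₀¹ η ^ (-1/2) * u(t, σ - (1 + σ) η) dη`, an integral over a fixed interval
against an integrable weight, which can be differentiated under the integral sign; each
`σ`-derivative brings out a factor `(1 - η) ∂ₛ`. After inserting the heat equation for `∂ₜ u`,
the difference of the two sides is `(1 + σ) ^ (-1/2)` times the integral of an exact derivative,
since `η ^ (-1/2) * (g / 2 + η g') = (η ^ (1/2) g)'`, applied to `g = u(t, σ - (1 + σ) η)` and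
`g = (1 - η) ∂ₛu(t, σ - (1 + σ) η)`. Only the endpoint `η = 1`, where `σ - (1 + σ) η = -1`,
contributes, and it gives the boundary term.
-/

noncomputable def abelIntegral (f : ℝ → ℝ) : ℝ :=
  ∫ η in Ioc (0 : ℝ) 1, η ^ (-(1 : ℝ) / 2) * f η

theorem integrableOn_rpow_neg_half_mul {f : ℝ → ℝ} (hf : ContinuousOn f (Icc 0 1)) :
    IntegrableOn (fun η : ℝ => η ^ (-(1 : ℝ) / 2) * f η) (Ioc 0 1) := by
  have hr : IntegrableOn (fun η : ℝ => η ^ (-(1 : ℝ) / 2)) (Ioc 0 1) := by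
    simpa [intervalIntegrable_iff, uIoc_of_le zero_le_one] using
      intervalIntegral.intervalIntegrable_rpow' (a := 0) (b := 1) (r := -(1 : ℝ) / 2) (by norm_num)
  exact hr.mul_continuousOn_of_subset hf measurableSet_Ioc isCompact_Icc Ioc_subset_Icc_self

theorem abelIntegral_congr {f g : ℝ → ℝ} (h : EqOn f g (Ioc 0 1)) :
    abelIntegral f = abelIntegral g :=
  setIntegral_congr_fun measurableSet_Ioc fun η hη => by rw [h hη]

theorem abelIntegral_const_mul (a : ℝ) (f : ℝ → ℝ) :
    abelIntegral (fun η => a * f η) = a * abelIntegral f := by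
  simp only [abelIntegral, ← integral_const_mul, mul_left_comm a]

theorem abelIntegral_sub {f g : ℝ → ℝ} (hf : ContinuousOn f (Icc 0 1))
    (hg : ContinuousOn g (Icc 0 1)) :
    abelIntegral (fun η => f η - g η) = abelIntegral f - abelIntegral g := by
  simp only [abelIntegral, mul_sub]
  exact integral_sub (integrableOn_rpow_neg_half_mul hf) (integrableOn_rpow_neg_half_mul hg)

theorem abelIntegral_half_add_mul_deriv {g g' : ℝ → ℝ} (hg : ContinuousOn g (Icc 0 1))
    (hg' : ContinuousOn g' (Icc 0 1)) (hderiv : ∀ η ∈ Ioo (0 : ℝ) 1, HasDerivAt g (g' η) η) :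
    abelIntegral (fun η => g η / 2 + η * g' η) = g 1 := by
  have hsqrt : ContinuousOn (fun η : ℝ => η ^ ((1 : ℝ) / 2)) (Icc 0 1) :=
    (continuous_rpow_const (by norm_num)).continuousOn
  have hprim : ∀ η ∈ Ioo (0 : ℝ) 1, HasDerivWithinAt (fun x => x ^ ((1 : ℝ) / 2) * g x)
      (η ^ (-(1 : ℝ) / 2) * (g η / 2 + η * g' η)) (Ioi η) η := by
    intro η hη
    have hpow : η ^ ((1 : ℝ) / 2) = η * η ^ (-(1 : ℝ) / 2) := by
      rw [← rpow_one_add' hη.1.le (by norm_num)]; norm_num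
    refine ((hasDerivAt_rpow_const (Or.inl hη.1.ne')).mul
      (hderiv η hη)).hasDerivWithinAt.congr_deriv ?_
    rw [hpow]; norm_num; ring
  have hint := integrableOn_rpow_neg_half_mul
    (hg.div_const 2 |>.add ((continuousOn_id).mul hg'))
  rw [abelIntegral, ← intervalIntegral.integral_of_le zero_le_one,
    intervalIntegral.integral_eq_sub_of_hasDeriv_right_of_le zero_le_one (hsqrt.mul hg) hprim
      ((intervalIntegrable_iff_integrableOn_Ioc_of_le zero_le_one).2 hint)]
  simp

theorem abelIntegral_heat_identity (ν σ : ℝ) {φ φ₁ φ₂ : ℝ → ℝ} (hφ : ContinuousOn φ (Icc 0 1))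
    (hφ₁ : ContinuousOn φ₁ (Icc 0 1)) (hφ₂ : ContinuousOn φ₂ (Icc 0 1))
    (hdφ : ∀ η ∈ Ioo (0 : ℝ) 1, HasDerivAt φ (-(1 + σ) * φ₁ η) η)
    (hdφ₁ : ∀ η ∈ Ioo (0 : ℝ) 1, HasDerivAt φ₁ (-(1 + σ) * φ₂ η) η) :
    (1 + σ) * (abelIntegral fun η =>
        (1 - (σ - (1 + σ) * η) ^ 2) * φ₂ η - (ν + 1) * (σ - (1 + σ) * η) * φ₁ η) -
      (1 + σ) ^ 2 * (1 - σ) * (abelIntegral fun η => (1 - η) ^ 2 * φ₂ η) -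
      (1 + σ) * (1 - σ - ν * σ) * (abelIntegral fun η => (1 - η) * φ₁ η) -
      (ν - 1) / 2 * abelIntegral φ = -(ν - 1) * φ 1 := by
  have h₁ : (abelIntegral fun η => φ η / 2 + η * (-(1 + σ) * φ₁ η)) = φ 1 :=
    abelIntegral_half_add_mul_deriv hφ (by fun_prop) hdφ
  have h₂ : (abelIntegral fun η =>
      (1 - η) * φ₁ η / 2 + η * (-φ₁ η + (1 - η) * (-(1 + σ) * φ₂ η))) = 0 := by
    refine (abelIntegral_half_add_mul_deriv (g := fun η => (1 - η) * φ₁ η) (by fun_prop)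
      (by fun_prop) fun η hη => ?_).trans (by ring)
    exact (((hasDerivAt_id' η).const_sub 1).mul (hdφ₁ η hη)).congr_deriv (by ring)
  simp only [← abelIntegral_const_mul]
  rw [← abelIntegral_sub (by fun_prop) (by fun_prop),
    ← abelIntegral_sub (by fun_prop) (by fun_prop), ← abelIntegral_sub (by fun_prop) (by fun_prop)]
  calc _ = abelIntegral fun η =>
          -(2 * (1 + σ)) * ((1 - η) * φ₁ η / 2 + η * (-φ₁ η + (1 - η) * (-(1 + σ) * φ₂ η))) -
            (ν - 1) * (φ η / 2 + η * (-(1 + σ) * φ₁ η)) :=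
        abelIntegral_congr fun η _ => by ring
    _ = _ := by
      rw [abelIntegral_sub (by fun_prop) (by fun_prop), abelIntegral_const_mul,
        abelIntegral_const_mul, h₁, h₂]
      ring

theorem hasDerivAt_abelIntegral_of_dominated {F F' : ℝ → ℝ → ℝ} {s : Set ℝ} {x₀ C : ℝ}
    (hs : s ∈ 𝓝 x₀) (hF : ∀ x ∈ s, ContinuousOn (F x) (Icc 0 1))
    (hF' : ContinuousOn (F' x₀) (Icc 0 1))
    (hbound : ∀ x ∈ s, ∀ η ∈ Ioo (0 : ℝ) 1, |F' x η| ≤ C)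
    (hderiv : ∀ x ∈ s, ∀ η ∈ Ioo (0 : ℝ) 1, HasDerivAt (F · η) (F' x η) x) :
    HasDerivAt (fun x => abelIntegral (F x)) (abelIntegral (F' x₀)) x₀ := by
  have hae : ∀ P : ℝ → Prop, (∀ η ∈ Ioo (0 : ℝ) 1, P η) →
      ∀ᵐ η ∂(volume.restrict (Ioc (0 : ℝ) 1)), P η := fun P hP => by
    rw [Measure.restrict_congr_set Ioo_ae_eq_Ioc.symm]
    exact ae_restrict_of_forall_mem measurableSet_Ioo hP
  refine (hasDerivAt_integral_of_dominated_loc_of_deriv_le (μ := volume.restrict (Ioc 0 1))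
    (F := fun x η => η ^ (-(1 : ℝ) / 2) * F x η) (F' := fun x η => η ^ (-(1 : ℝ) / 2) * F' x η)
    (bound := fun η => η ^ (-(1 : ℝ) / 2) * C)
    hs ?_ (integrableOn_rpow_neg_half_mul (hF x₀ (mem_of_mem_nhds hs)))
    (integrableOn_rpow_neg_half_mul hF').aestronglyMeasurable ?_
    (integrableOn_rpow_neg_half_mul continuousOn_const) ?_).2
  · filter_upwards [hs] with x hx
    exact (integrableOn_rpow_neg_half_mul (hF x hx)).aestronglyMeasurable
  · refine hae _ fun η hη x hx => ?_
    rw [norm_mul, norm_of_nonneg (rpow_nonneg hη.1.le _), norm_eq_abs]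
    exact mul_le_mul_of_nonneg_left (hbound x hx η hη) (rpow_nonneg hη.1.le _)
  · exact hae _ fun η hη x hx => (hderiv x hx η hη).const_mul _

theorem sub_one_add_mul_mem_Icc {x η : ℝ} (hx : x ∈ Icc (-1 : ℝ) 1) (hη : η ∈ Icc (0 : ℝ) 1) :
    x - (1 + x) * η ∈ Icc (-1 : ℝ) 1 := by
  constructor <;> nlinarith [hx.1, hx.2, hη.1, hη.2]

theorem sub_one_add_mul_mem_Ioo {x η : ℝ} (hx : x ∈ Ioo (-1 : ℝ) 1) (hη : η ∈ Ico (0 : ℝ) 1) :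
    x - (1 + x) * η ∈ Ioo (-1 : ℝ) 1 := by
  constructor <;> nlinarith [hx.1, hx.2, hη.1, hη.2]

theorem ContinuousOn.comp_sub_one_add_mul {f : ℝ → ℝ} (hf : ContinuousOn f (Icc (-1) 1)) {x : ℝ}
    (hx : x ∈ Icc (-1 : ℝ) 1) : ContinuousOn (fun η => f (x - (1 + x) * η)) (Icc 0 1) :=
  hf.comp (by fun_prop) fun _ hη => sub_one_add_mul_mem_Icc hx hη

theorem hasDerivAt_comp_sub_one_add_mul {f f' : ℝ → ℝ}
    (hff' : ∀ s ∈ Ioo (-1 : ℝ) 1, HasDerivAt f (f' s) s) {σ η : ℝ} (hσ : σ ∈ Ioo (-1 : ℝ) 1)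
    (hη : η ∈ Ioo (0 : ℝ) 1) :
    HasDerivAt (fun η => f (σ - (1 + σ) * η)) (-(1 + σ) * f' (σ - (1 + σ) * η)) η :=
  ((hff' _ (sub_one_add_mul_mem_Ioo hσ (Ioo_subset_Ico_self hη))).comp η
    (((hasDerivAt_id' η).const_mul (1 + σ)).const_sub σ)).congr_deriv (by ring)

theorem hasDerivAt_abelIntegral_pow_mul_comp (m : ℕ) {f f' : ℝ → ℝ}
    (hf : ContinuousOn f (Icc (-1) 1)) (hf' : ContinuousOn f' (Icc (-1) 1))
    (hff' : ∀ s ∈ Ioo (-1 : ℝ) 1, HasDerivAt f (f' s) s) {x : ℝ} (hx : x ∈ Ioo (-1 : ℝ) 1) :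
    HasDerivAt (fun y => abelIntegral fun η => (1 - η) ^ m * f (y - (1 + y) * η))
      (abelIntegral fun η => (1 - η) ^ (m + 1) * f' (x - (1 + x) * η)) x := by
  obtain ⟨C, hC⟩ := isCompact_Icc.exists_bound_of_continuousOn hf'
  refine hasDerivAt_abelIntegral_of_dominated (F := fun y η => (1 - η) ^ m * f (y - (1 + y) * η))
    (F' := fun y η => (1 - η) ^ (m + 1) * f' (y - (1 + y) * η)) (C := C) (isOpen_Ioo.mem_nhds hx)
    (fun y hy => (by fun_prop : Continuous fun η : ℝ => (1 - η) ^ m).continuousOn.mul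
      (hf.comp_sub_one_add_mul (Ioo_subset_Icc_self hy)))
    ((by fun_prop : Continuous fun η : ℝ => (1 - η) ^ (m + 1)).continuousOn.mul
      (hf'.comp_sub_one_add_mul (Ioo_subset_Icc_self hx))) (fun y hy η hη => ?_)
    (fun y hy η hη => ?_)
  · have hη₁ : |1 - η| ≤ 1 := abs_le.2 ⟨by linarith [hη.2], by linarith [hη.1]⟩
    rw [abs_mul, abs_pow]
    exact (mul_le_of_le_one_left (abs_nonneg _) (pow_le_one₀ (abs_nonneg _) hη₁)).trans
      (hC _ (sub_one_add_mul_mem_Icc (Ioo_subset_Icc_self hy) (Ioo_subset_Icc_self hη)))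
  · have hA : HasDerivAt (fun y => y - (1 + y) * η) (1 - η) y :=
      ((hasDerivAt_id' y).sub (((hasDerivAt_id' y).const_add 1).mul_const η)).congr_deriv
        (by ring)
    exact (((hff' _ (sub_one_add_mul_mem_Ioo hy (Ioo_subset_Ico_self hη))).comp y hA).const_mul
      ((1 - η) ^ m)).congr_deriv (by ring)

theorem hasDerivAt_abelIntegral_comp_param {u : ℝ → ℝ → ℝ} {K : Set ℝ} (hK : IsCompact K)
    (hu : ∀ τ ∈ Ioi (0 : ℝ), ContinuousOn (u τ) K)
    (hdt : ∀ s ∈ K, DifferentiableOn ℝ (fun τ => u τ s) (Ioi 0))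
    (hdtc : ContinuousOn (fun p : ℝ × ℝ => deriv (fun τ => u τ p.2) p.1) (Ioi 0 ×ˢ K))
    {g : ℝ → ℝ} (hg : ContinuousOn g (Icc 0 1)) (hgK : MapsTo g (Icc 0 1) K) {t : ℝ} (ht : 0 < t) :
    HasDerivAt (fun τ => abelIntegral fun η => u τ (g η))
      (abelIntegral fun η => deriv (fun τ => u τ (g η)) t) t := by
  have hT : Icc (t / 2) (2 * t) ⊆ Ioi 0 := fun τ hτ => by
    simp only [mem_Ioi]; linarith [hτ.1]
  obtain ⟨C, hC⟩ := (isCompact_Icc.prod hK).exists_bound_of_continuousOn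
    (hdtc.mono (prod_mono_left hT))
  refine hasDerivAt_abelIntegral_of_dominated (F := fun τ η => u τ (g η))
    (F' := fun τ η => deriv (fun τ => u τ (g η)) τ) (C := C)
    (Icc_mem_nhds (by linarith : t / 2 < t) (by linarith : t < 2 * t))
    (fun τ hτ => (hu τ (hT hτ)).comp hg hgK)
    (hdtc.comp (continuousOn_const.prodMk hg) fun η hη => ⟨ht, hgK hη⟩) (fun τ hτ η hη => ?_)
    (fun τ hτ η hη => ?_)
  · simpa using hC (τ, g η) ⟨hτ, hgK (Ioo_subset_Icc_self hη)⟩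
  · exact ((hdt _ (hgK (Ioo_subset_Icc_self hη)) τ (hT hτ)).differentiableAt
      (Ioi_mem_nhds (hT hτ))).hasDerivAt

theorem ContDiffOn.hasDerivAt_derivWithin_Icc {f : ℝ → ℝ} {a b x : ℝ}
    (hf : ContDiffOn ℝ 1 f (Icc a b)) (hx : x ∈ Ioo a b) :
    HasDerivAt f (derivWithin f (Icc a b) x) x :=
  (hf.differentiableOn one_ne_zero x (Ioo_subset_Icc_self hx)).hasDerivWithinAt.hasDerivAt
    (Icc_mem_nhds hx.1 hx.2)

theorem HasDerivAt.one_add_rpow_mul {W : ℝ → ℝ} {W' x : ℝ} (p : ℝ) (hx : -1 < x)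
    (hW : HasDerivAt W W' x) :
    HasDerivAt (fun y => (1 + y) ^ p * W y) (p * (1 + x) ^ (p - 1) * W x + (1 + x) ^ p * W') x :=
  ((((hasDerivAt_id' x).const_add 1).rpow_const (Or.inl (by linarith))).mul hW).congr_deriv
    (by ring)

theorem integral_Ioc_rpow_neg_half_mul {c : ℝ} (hc : 0 < c) (f : ℝ → ℝ) :
    ∫ ξ in Ioc 0 c, ξ ^ (-(1 : ℝ) / 2) * f ξ =
      c ^ ((1 : ℝ) / 2) * abelIntegral fun η => f (c * η) := by
  have hscale : ∀ η ∈ Ioc (0 : ℝ) 1,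
      c * ((c * η) ^ (-(1 : ℝ) / 2) * f (c * η)) =
        c ^ ((1 : ℝ) / 2) * (η ^ (-(1 : ℝ) / 2) * f (c * η)) := by
    intro η hη
    rw [mul_rpow hc.le hη.1.le, ← mul_assoc, ← mul_assoc, ← rpow_one_add' hc.le (by norm_num)]
    norm_num [mul_assoc]
  rw [← intervalIntegral.integral_of_le hc.le, abelIntegral, ← integral_const_mul,
    ← setIntegral_congr_fun measurableSet_Ioc hscale, integral_const_mul,
    ← intervalIntegral.integral_of_le zero_le_one,
    ← smul_eq_mul, intervalIntegral.smul_integral_comp_mul_left fun ξ => ξ ^ (-(1 : ℝ) / 2) * f ξ]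
  simp

noncomputable def abelTransform (f : ℝ → ℝ) (σ : ℝ) : ℝ :=
  ∫ ξ in Ioc 0 (1 + σ), ξ ^ (-(1 : ℝ) / 2) * f (σ - ξ)

theorem abelTransform_eq {σ : ℝ} (hσ : -1 < σ) (f : ℝ → ℝ) :
    abelTransform f σ = (1 + σ) ^ ((1 : ℝ) / 2) * abelIntegral fun η => f (σ - (1 + σ) * η) :=
  integral_Ioc_rpow_neg_half_mul (by linarith) _

theorem abelTransform_congr {f g : ℝ → ℝ} (h : EqOn f g (Icc (-1) 1)) {σ : ℝ}
    (hσ : σ ∈ Ioc (-1 : ℝ) 1) : abelTransform f σ = abelTransform g σ := by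
  rw [abelTransform_eq hσ.1, abelTransform_eq hσ.1,
    abelIntegral_congr fun η hη => h (sub_one_add_mul_mem_Icc (Ioc_subset_Icc_self hσ)
      (Ioc_subset_Icc_self hη))]

theorem hasDerivAt_abelTransform_param {u : ℝ → ℝ → ℝ}
    (hu : ∀ τ ∈ Ioi (0 : ℝ), ContinuousOn (u τ) (Icc (-1) 1))
    (hdt : ∀ s ∈ Icc (-1 : ℝ) 1, DifferentiableOn ℝ (fun τ => u τ s) (Ioi 0))
    (hdtc : ContinuousOn (fun p : ℝ × ℝ => deriv (fun τ => u τ p.2) p.1) (Ioi 0 ×ˢ Icc (-1) 1))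
    {t σ : ℝ} (ht : 0 < t) (hσ : σ ∈ Ioc (-1 : ℝ) 1) :
    HasDerivAt (fun τ => abelTransform (u τ) σ)
      (abelTransform (fun s => deriv (fun τ => u τ s) t) σ) t := by
  simp only [abelTransform_eq hσ.1]
  exact (hasDerivAt_abelIntegral_comp_param isCompact_Icc hu hdt hdtc (by fun_prop)
    (fun η hη => sub_one_add_mul_mem_Icc (Ioc_subset_Icc_self hσ) hη) ht).const_mul _

theorem hasDerivAt_abelTransform {f f' : ℝ → ℝ} (hf : ContinuousOn f (Icc (-1) 1))
    (hf' : ContinuousOn f' (Icc (-1) 1)) (hff' : ∀ s ∈ Ioo (-1 : ℝ) 1, HasDerivAt f (f' s) s)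
    {x : ℝ} (hx : x ∈ Ioo (-1 : ℝ) 1) :
    HasDerivAt (abelTransform f)
      ((1 : ℝ) / 2 * (1 + x) ^ ((1 : ℝ) / 2 - 1) * (abelIntegral fun η => f (x - (1 + x) * η)) +
        (1 + x) ^ ((1 : ℝ) / 2) * abelIntegral fun η => (1 - η) * f' (x - (1 + x) * η)) x := by
  have hW : HasDerivAt (fun y => abelIntegral fun η => f (y - (1 + y) * η))
      (abelIntegral fun η => (1 - η) * f' (x - (1 + x) * η)) x := by
    simpa using hasDerivAt_abelIntegral_pow_mul_comp 0 hf hf' hff' hx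
  exact (hW.one_add_rpow_mul _ hx.1).congr_of_eventuallyEq
    (eventually_of_mem (Ioi_mem_nhds hx.1) fun y hy => abelTransform_eq hy f)

theorem hasDerivAt_deriv_abelTransform {f f' f'' : ℝ → ℝ} (hf : ContinuousOn f (Icc (-1) 1))
    (hf' : ContinuousOn f' (Icc (-1) 1)) (hf'' : ContinuousOn f'' (Icc (-1) 1))
    (hff' : ∀ s ∈ Ioo (-1 : ℝ) 1, HasDerivAt f (f' s) s)
    (hf'f'' : ∀ s ∈ Ioo (-1 : ℝ) 1, HasDerivAt f' (f'' s) s) {σ : ℝ} (hσ : σ ∈ Ioo (-1 : ℝ) 1) :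
    HasDerivAt (deriv (abelTransform f))
      (-(1 / 4) * (1 + σ) ^ ((1 : ℝ) / 2 - 1 - 1) * (abelIntegral fun η => f (σ - (1 + σ) * η)) +
        (1 + σ) ^ ((1 : ℝ) / 2 - 1) * (abelIntegral fun η => (1 - η) * f' (σ - (1 + σ) * η)) +
        (1 + σ) ^ ((1 : ℝ) / 2) * abelIntegral fun η => (1 - η) ^ 2 * f'' (σ - (1 + σ) * η)) σ := by
  have hW : HasDerivAt (fun y => abelIntegral fun η => f (y - (1 + y) * η))
      (abelIntegral fun η => (1 - η) * f' (σ - (1 + σ) * η)) σ := by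
    simpa using hasDerivAt_abelIntegral_pow_mul_comp 0 hf hf' hff' hσ
  have hW₁ : HasDerivAt (fun y => abelIntegral fun η => (1 - η) * f' (y - (1 + y) * η))
      (abelIntegral fun η => (1 - η) ^ 2 * f'' (σ - (1 + σ) * η)) σ := by
    simpa using hasDerivAt_abelIntegral_pow_mul_comp 1 hf' hf'' hf'f'' hσ
  refine ((((hW.one_add_rpow_mul ((1 : ℝ) / 2 - 1) hσ.1).const_mul ((1 : ℝ) / 2)).add
    (hW₁.one_add_rpow_mul ((1 : ℝ) / 2) hσ.1)).congr_of_eventuallyEq ?_).congr_deriv (by ring)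
  filter_upwards [isOpen_Ioo.mem_nhds hσ] with x hx
  rw [(hasDerivAt_abelTransform hf hf' hff' hx).deriv, Pi.add_apply]
  ring

theorem abelTransform_heat_operator (ν : ℝ) {f : ℝ → ℝ} (hf : ContDiffOn ℝ 2 f (Icc (-1) 1))
    {σ : ℝ} (hσ : σ ∈ Ioo (-1 : ℝ) 1) :
    abelTransform (fun s => (1 - s ^ 2) * derivWithin (derivWithin f (Icc (-1) 1)) (Icc (-1) 1) s -
        (ν + 1) * s * derivWithin f (Icc (-1) 1) s) σ =
      (1 - σ ^ 2) * deriv (deriv (abelTransform f)) σ - ν * σ * deriv (abelTransform f) σ +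
        (2 * ν - 1) / 4 * abelTransform f σ - (ν - 1) * (1 + σ) ^ (-(1 : ℝ) / 2) * f (-1) := by
  set f₁ := derivWithin f (Icc (-1) 1)
  set f₂ := derivWithin f₁ (Icc (-1) 1)
  have hf₁ : ContDiffOn ℝ 1 f₁ (Icc (-1) 1) :=
    hf.derivWithin (uniqueDiffOn_Icc (by norm_num)) (by norm_num)
  have hf₂ : ContinuousOn f₂ (Icc (-1) 1) :=
    hf₁.continuousOn_derivWithin (uniqueDiffOn_Icc (by norm_num)) le_rfl
  have hdf : ∀ s ∈ Ioo (-1 : ℝ) 1, HasDerivAt f (f₁ s) s :=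
    fun s hs => (hf.of_le (by norm_num)).hasDerivAt_derivWithin_Icc hs
  have hdf₁ : ∀ s ∈ Ioo (-1 : ℝ) 1, HasDerivAt f₁ (f₂ s) s :=
    fun s hs => hf₁.hasDerivAt_derivWithin_Icc hs
  have key := abelIntegral_heat_identity ν σ (φ := fun η => f (σ - (1 + σ) * η))
    (hf.continuousOn.comp_sub_one_add_mul (Ioo_subset_Icc_self hσ))
    (hf₁.continuousOn.comp_sub_one_add_mul (Ioo_subset_Icc_self hσ))
    (hf₂.comp_sub_one_add_mul (Ioo_subset_Icc_self hσ))
    (fun η hη => hasDerivAt_comp_sub_one_add_mul hdf hσ hη)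
    (fun η hη => hasDerivAt_comp_sub_one_add_mul hdf₁ hσ hη)
  rw [show σ - (1 + σ) * 1 = -1 by ring] at key
  rw [(hasDerivAt_deriv_abelTransform hf.continuousOn hf₁.continuousOn hf₂ hdf hdf₁ hσ).deriv,
    (hasDerivAt_abelTransform hf.continuousOn hf₁.continuousOn hdf hσ).deriv,
    abelTransform_eq hσ.1, abelTransform_eq hσ.1]
  have hc : 1 + σ ≠ 0 := by linarith [hσ.1]
  rw [rpow_sub_one hc, rpow_sub_one hc, show -(1 : ℝ) / 2 = 1 / 2 - 1 by norm_num, rpow_sub_one hc]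
  set W := abelIntegral fun η => f (σ - (1 + σ) * η)
  set W₁ := abelIntegral fun η => (1 - η) * f₁ (σ - (1 + σ) * η)
  set W₂ := abelIntegral fun η => (1 - η) ^ 2 * f₂ (σ - (1 + σ) * η)
  set P := abelIntegral fun η => (1 - (σ - (1 + σ) * η) ^ 2) * f₂ (σ - (1 + σ) * η) -
    (ν + 1) * (σ - (1 + σ) * η) * f₁ (σ - (1 + σ) * η)
  field_simp
  linear_combination 8 * (1 + σ) * (1 + σ) ^ ((1 : ℝ) / 2) * key

theorem spherical_integral_transform_heat_equation_general (n : ℕ)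
    (u w : ℝ → ℝ → ℝ)
    -- continuously differentiable in `t`
    (hdt : ∀ s ∈ Set.Icc (-1 : ℝ) 1, DifferentiableOn ℝ (fun τ => u τ s) (Set.Ioi 0))
    (hdtc : ContinuousOn (fun p : ℝ × ℝ => deriv (fun τ => u τ p.2) p.1)
      (Set.Ioi 0 ×ˢ Set.Icc (-1) 1))
    -- twice continuously differentiable in `s` up to the boundary
    (hds : ∀ t ∈ Set.Ioi (0 : ℝ),
      ContDiffOn ℝ 2 (fun x => u t x) (Set.Icc (-1 : ℝ) 1))
    -- the spherical heat equation in the variable `s = cos r`, up to the boundary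
    (hueq : ∀ t ∈ Set.Ioi (0 : ℝ), ∀ s ∈ Set.Icc (-1 : ℝ) 1,
      deriv (fun τ => u τ s) t =
        (1 - s ^ 2) *
            derivWithin (fun x => derivWithin (fun y => u t y) (Set.Icc (-1 : ℝ) 1) x)
              (Set.Icc (-1 : ℝ) 1) s -
          ((n : ℝ) + 1) * s * derivWithin (fun x => u t x) (Set.Icc (-1 : ℝ) 1) s)
    (hw : ∀ t σ : ℝ, w t σ = ∫ ξ in Set.Ioc (0 : ℝ) (1 + σ), ξ ^ (-(1 : ℝ) / 2) * u t (σ - ξ)) :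
    ∀ t ∈ Set.Ioi (0 : ℝ), ∀ σ ∈ Set.Ioo (-1 : ℝ) 1,
      deriv (fun τ => w τ σ) t - (1 - σ ^ 2) * deriv (fun x => deriv (fun y => w t y) x) σ +
          (n : ℝ) * σ * deriv (fun x => w t x) σ =
        (2 * (n : ℝ) - 1) / 4 * w t σ -
          ((n : ℝ) - 1) * (1 + σ) ^ (-(1 : ℝ) / 2) * u t (-1) := by
  obtain rfl : w = fun τ => abelTransform (u τ) := funext₂ hw
  intro t ht σ hσ
  rw [(hasDerivAt_abelTransform_param (fun τ hτ => (hds τ hτ).continuousOn) hdt hdtc ht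
      (Ioo_subset_Ioc_self hσ)).deriv,
    abelTransform_congr (hueq t ht) (Ioo_subset_Ioc_self hσ),
    abelTransform_heat_operator n (hds t ht) hσ]
  ring

/-- Analytic core of the spherical integral recurrence with boundary term: if `u` is
continuous on `(0,∞) × [-1,1]`, continuously differentiable in `t`, twice continuously
differentiable in `s` up to the boundary, and satisfies
`∂_t u = (1-s²) ∂_s² u - (n+1) s ∂_s u` on `(0,∞) × [-1,1]`, then
`w(t,σ) = ∫_0^{1+σ} ξ^{-1/2} u(t,σ-ξ) dξ` satisfies
`∂_t w - (1-σ²) ∂_σ² w + n σ ∂_σ w = ((2n-1)/4) w - (n-1)(1+σ)^{-1/2} u(t,-1)`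
for `t > 0` and `σ ∈ (-1,1)`. -/
theorem spherical_integral_transform_heat_equation (n : ℕ) (hn : 0 < n)
    (u w : ℝ → ℝ → ℝ)
    (hcont : ContinuousOn (fun p : ℝ × ℝ => u p.1 p.2) (Set.Ioi 0 ×ˢ Set.Icc (-1) 1))
    -- continuously differentiable in `t`
    (hdt : ∀ s ∈ Set.Icc (-1 : ℝ) 1, DifferentiableOn ℝ (fun τ => u τ s) (Set.Ioi 0))
    (hdtc : ContinuousOn (fun p : ℝ × ℝ => deriv (fun τ => u τ p.2) p.1)
      (Set.Ioi 0 ×ˢ Set.Icc (-1) 1))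
    -- twice continuously differentiable in `s` up to the boundary
    (hds : ∀ t ∈ Set.Ioi (0 : ℝ),
      ContDiffOn ℝ 2 (fun x => u t x) (Set.Icc (-1 : ℝ) 1))
    (hdsc₁ : ContinuousOn
      (fun p : ℝ × ℝ => derivWithin (fun x => u p.1 x) (Set.Icc (-1 : ℝ) 1) p.2)
      (Set.Ioi 0 ×ˢ Set.Icc (-1) 1))
    (hdsc₂ : ContinuousOn
      (fun p : ℝ × ℝ =>
        derivWithin (fun x => derivWithin (fun y => u p.1 y) (Set.Icc (-1 : ℝ) 1) x)
          (Set.Icc (-1 : ℝ) 1) p.2)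
      (Set.Ioi 0 ×ˢ Set.Icc (-1) 1))
    -- the spherical heat equation in the variable `s = cos r`, up to the boundary
    (hueq : ∀ t ∈ Set.Ioi (0 : ℝ), ∀ s ∈ Set.Icc (-1 : ℝ) 1,
      deriv (fun τ => u τ s) t =
        (1 - s ^ 2) *
            derivWithin (fun x => derivWithin (fun y => u t y) (Set.Icc (-1 : ℝ) 1) x)
              (Set.Icc (-1 : ℝ) 1) s -
          ((n : ℝ) + 1) * s * derivWithin (fun x => u t x) (Set.Icc (-1 : ℝ) 1) s)
    (hw : ∀ t σ : ℝ, w t σ = ∫ ξ in Set.Ioc (0 : ℝ) (1 + σ), ξ ^ (-(1 : ℝ) / 2) * u t (σ - ξ)) :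
    ∀ t ∈ Set.Ioi (0 : ℝ), ∀ σ ∈ Set.Ioo (-1 : ℝ) 1,
      deriv (fun τ => w τ σ) t - (1 - σ ^ 2) * deriv (fun x => deriv (fun y => w t y) x) σ +
          (n : ℝ) * σ * deriv (fun x => w t x) σ =
        (2 * (n : ℝ) - 1) / 4 * w t σ -
          ((n : ℝ) - 1) * (1 + σ) ^ (-(1 : ℝ) / 2) * u t (-1) :=
  spherical_integral_transform_heat_equation_general n u w hdt hdtc hds hueq hw
end

section
/- Let n be a positive integer and let f : [0,π] → ℝ be a continuous function. Then lim_{ρ→0⁺} sin^{1−n}(ρ) ∫_0^ρ f(r) sin^{n−1}(r) (cos r − cos ρ)^{-1/2} dr = (1/√2) B(1/2, n/2) · f(0), where B denotes the Euler Beta function B(x,y) = Γ(x)Γ(y)/Γ(x+y). -/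
/-!
Substituting `r = tρ` turns `sin ρ ^ (1 - n) * ∫₀^ρ …` into `∫₀¹ f (tρ) K dt` with the kernel
`K = rescaledKernel n ρ t = (sin tρ / sin ρ) ^ (n - 1) * ((cos tρ - cos ρ) / ρ²) ^ (-1/2)`.
As `ρ → 0⁺`, `K → t ^ (n - 1) * ((1 - t²) / 2) ^ (-1/2)`. Jordan's inequality gives
`cos tρ - cos ρ ≥ (2 / π²) (1 - t²) ρ²`, so `K ≤ (π² / 2) ^ (1/2) (1 - t) ^ (-1/2)` for
`ρ ≤ π / 2`, an integrable bound. Dominated convergence reduces the limit to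
`f 0 * ∫₀¹ t ^ (n - 1) ((1 - t²) / 2) ^ (-1/2) dt`, which the substitution `x = t²` turns into
`B(n/2, 1/2) / √2`.
-/

open Real Set Filter Topology intervalIntegral MeasureTheory

theorem integral_rpow_mul_one_sub_rpow_eq_beta {α β : ℝ} (hα : 0 < α) (hβ : 0 < β) :
    ∫ x in (0 : ℝ)..1, x ^ (α - 1) * (1 - x) ^ (β - 1) = ProbabilityTheory.beta α β := by
  have h : Complex.betaIntegral α β = ↑(∫ x in (0 : ℝ)..1, x ^ (α - 1) * (1 - x) ^ (β - 1)) := by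
    rw [Complex.betaIntegral, ← intervalIntegral.integral_ofReal]
    refine intervalIntegral.integral_congr fun x hx => ?_
    rw [uIcc_of_le zero_le_one] at hx
    push_cast
    rw [Complex.ofReal_cpow hx.1, Complex.ofReal_cpow (sub_nonneg.2 hx.2)]
    push_cast
    rfl
  rw [ProbabilityTheory.beta_eq_betaIntegralReal α β hα hβ, h, Complex.ofReal_re]

theorem tendsto_sin_mul_div_self (c : ℝ) :
    Tendsto (fun ρ => sin (c * ρ) / ρ) (𝓝[≠] 0) (𝓝 c) := by
  have h : HasDerivAt (fun ρ => sin (c * ρ)) c 0 := by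
    simpa using ((hasDerivAt_id (0 : ℝ)).const_mul c).sin
  simpa [div_eq_inv_mul] using h.tendsto_slope_zero

theorem tendsto_sin_mul_div_sin (t : ℝ) :
    Tendsto (fun ρ => sin (t * ρ) / sin ρ) (𝓝[≠] 0) (𝓝 t) := by
  have h := (tendsto_sin_mul_div_self t).div (tendsto_sin_mul_div_self 1) one_ne_zero
  rw [div_one] at h
  refine h.congr' ?_
  filter_upwards [self_mem_nhdsWithin] with ρ hρ
  rw [Pi.div_apply, one_mul, div_div_div_cancel_right₀ hρ]

theorem cos_mul_sub_cos (t ρ : ℝ) :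
    cos (t * ρ) - cos ρ = 2 * sin ((1 + t) / 2 * ρ) * sin ((1 - t) / 2 * ρ) := by
  rw [cos_sub_cos, show (t * ρ + ρ) / 2 = (1 + t) / 2 * ρ by ring,
    show (t * ρ - ρ) / 2 = -((1 - t) / 2 * ρ) by ring, sin_neg]
  ring

theorem tendsto_cos_mul_sub_cos_div_sq (t : ℝ) :
    Tendsto (fun ρ => (cos (t * ρ) - cos ρ) / ρ ^ 2) (𝓝[≠] 0) (𝓝 ((1 - t ^ 2) / 2)) := by
  have h := ((tendsto_sin_mul_div_self ((1 + t) / 2)).mul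
    (tendsto_sin_mul_div_self ((1 - t) / 2))).const_mul 2
  convert h using 2 with ρ
  · rw [cos_mul_sub_cos]; ring
  · ring

theorem mul_sq_le_cos_mul_sub_cos {t ρ : ℝ} (ht0 : 0 ≤ t) (ht1 : t ≤ 1) (hρ0 : 0 ≤ ρ)
    (hρ : ρ ≤ π / 2) : 2 / π ^ 2 * (1 - t ^ 2) * ρ ^ 2 ≤ cos (t * ρ) - cos ρ := by
  have hπ := pi_pos
  have jordan : ∀ c, 0 ≤ c → c ≤ 1 → 2 / π * (c * ρ) ≤ sin (c * ρ) := fun c hc0 hc1 =>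
    mul_le_sin (by positivity) (by nlinarith)
  have h1 := jordan ((1 + t) / 2) (by linarith) (by linarith)
  have h2 := jordan ((1 - t) / 2) (by linarith) (by linarith)
  rw [cos_mul_sub_cos]
  calc 2 / π ^ 2 * (1 - t ^ 2) * ρ ^ 2
      = 2 * (2 / π * ((1 + t) / 2 * ρ)) * (2 / π * ((1 - t) / 2 * ρ)) := by
        field_simp; ring
    _ ≤ 2 * sin ((1 + t) / 2 * ρ) * sin ((1 - t) / 2 * ρ) := by
        have : 0 ≤ 2 / π * ((1 + t) / 2 * ρ) := by positivity
        gcongr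
        linarith

noncomputable def rescaledKernel (a ρ t : ℝ) : ℝ :=
  (sin (t * ρ) / sin ρ) ^ (a - 1) * ((cos (t * ρ) - cos ρ) / ρ ^ 2) ^ (-(1 : ℝ) / 2)

theorem sq_rpow_neg_half {ρ : ℝ} (hρ : 0 ≤ ρ) : (ρ ^ 2) ^ (-(1 : ℝ) / 2) = ρ⁻¹ := by
  rw [← rpow_natCast, ← rpow_mul hρ]
  norm_num [rpow_neg_one]

theorem sin_rpow_mul_integral_eq_setIntegral_rescaledKernel (f : ℝ → ℝ) (a : ℝ) {ρ : ℝ}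
    (hρ0 : 0 < ρ) (hρπ : ρ ≤ π) :
    sin ρ ^ (1 - a) * ∫ r in (0 : ℝ)..ρ, f r * sin r ^ (a - 1) * (cos r - cos ρ) ^ (-(1 : ℝ) / 2)
      = ∫ t in Ioo 0 1, f (t * ρ) * rescaledKernel a ρ t := by
  have hsub := intervalIntegral.integral_comp_mul_right (a := 0) (b := 1)
    (fun r => f r * sin r ^ (a - 1) * (cos r - cos ρ) ^ (-(1 : ℝ) / 2)) hρ0.ne'
  rw [zero_mul, one_mul, smul_eq_mul, eq_inv_mul_iff_mul_eq₀ hρ0.ne'] at hsub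
  rw [← integral_Ioc_eq_integral_Ioo, ← intervalIntegral.integral_of_le zero_le_one, ← hsub,
    ← mul_assoc, ← intervalIntegral.integral_const_mul]
  refine intervalIntegral.integral_congr fun t ht => ?_
  rw [uIcc_of_le zero_le_one] at ht
  have hsin : 0 ≤ sin ρ := sin_nonneg_of_nonneg_of_le_pi hρ0.le hρπ
  have htρ : t * ρ ≤ ρ := mul_le_of_le_one_left hρ0.le ht.2
  have hsin_t : 0 ≤ sin (t * ρ) := sin_nonneg_of_nonneg_of_le_pi (by nlinarith [ht.1]) (by linarith)
  have hcos : 0 ≤ cos (t * ρ) - cos ρ :=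
    sub_nonneg.2 (cos_le_cos_of_nonneg_of_le_pi (by nlinarith [ht.1]) hρπ htρ)
  unfold rescaledKernel
  rw [div_rpow hsin_t hsin, div_rpow hcos (sq_nonneg ρ), sq_rpow_neg_half hρ0.le,
    show 1 - a = -(a - 1) by ring, rpow_neg hsin, div_eq_mul_inv _ ρ⁻¹, inv_inv]
  ring

theorem tendsto_rescaledKernel (a : ℝ) {t : ℝ} (ht0 : 0 < t) (ht1 : t < 1) :
    Tendsto (fun ρ => rescaledKernel a ρ t) (𝓝[≠] 0)
      (𝓝 (t ^ (a - 1) * ((1 - t ^ 2) / 2) ^ (-(1 : ℝ) / 2))) := by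
  have hpos : 0 < (1 - t ^ 2) / 2 := by nlinarith
  exact ((tendsto_sin_mul_div_sin t).rpow_const (Or.inl ht0.ne')).mul
    ((tendsto_cos_mul_sub_cos_div_sq t).rpow_const (Or.inl hpos.ne'))

theorem rescaledKernel_nonneg (a : ℝ) {ρ t : ℝ} (hρ0 : 0 ≤ ρ) (hρπ : ρ ≤ π) (ht0 : 0 ≤ t)
    (ht1 : t ≤ 1) : 0 ≤ rescaledKernel a ρ t := by
  have htρ : t * ρ ≤ ρ := mul_le_of_le_one_left hρ0 ht1
  have hsin : 0 ≤ sin ρ := sin_nonneg_of_nonneg_of_le_pi hρ0 hρπ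
  have hsin_t : 0 ≤ sin (t * ρ) := sin_nonneg_of_nonneg_of_le_pi (by positivity) (by linarith)
  have hcos : 0 ≤ cos (t * ρ) - cos ρ :=
    sub_nonneg.2 (cos_le_cos_of_nonneg_of_le_pi (by positivity) hρπ htρ)
  unfold rescaledKernel
  positivity

theorem rescaledKernel_le {a ρ t : ℝ} (ha : 1 ≤ a) (hρ0 : 0 < ρ) (hρ : ρ ≤ π / 2) (ht0 : 0 ≤ t)
    (ht1 : t < 1) :
    rescaledKernel a ρ t ≤ (2 / π ^ 2) ^ (-(1 : ℝ) / 2) * (1 - t) ^ (-(1 : ℝ) / 2) := by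
  have hπ := pi_pos
  have htρ : t * ρ ≤ ρ := mul_le_of_le_one_left hρ0.le ht1.le
  have hsin_t : 0 ≤ sin (t * ρ) := sin_nonneg_of_nonneg_of_le_pi (by positivity) (by linarith)
  have hsin_le : sin (t * ρ) ≤ sin ρ :=
    sin_le_sin_of_le_of_le_pi_div_two (by linarith [mul_nonneg ht0 hρ0.le]) hρ htρ
  have hcos : 2 / π ^ 2 * (1 - t) ≤ (cos (t * ρ) - cos ρ) / ρ ^ 2 := by
    rw [le_div_iff₀ (by positivity)]
    refine le_trans ?_ (mul_sq_le_cos_mul_sub_cos ht0 ht1.le hρ0.le hρ)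
    gcongr
    nlinarith
  rw [← mul_rpow (by positivity) (by linarith)]
  calc rescaledKernel a ρ t ≤ 1 * ((cos (t * ρ) - cos ρ) / ρ ^ 2) ^ (-(1 : ℝ) / 2) := by
        unfold rescaledKernel
        gcongr
        · exact rpow_nonneg (le_trans (by positivity) hcos) _
        · exact rpow_le_one (div_nonneg hsin_t (hsin_t.trans hsin_le))
            (div_le_one_of_le₀ hsin_le (hsin_t.trans hsin_le)) (by linarith)
    _ ≤ (2 / π ^ 2 * (1 - t)) ^ (-(1 : ℝ) / 2) := by
        rw [one_mul]
        exact rpow_le_rpow_of_nonpos (mul_pos (by positivity) (by linarith)) hcos (by norm_num)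

theorem measurable_rescaledKernel (a ρ : ℝ) : Measurable (rescaledKernel a ρ) := by
  unfold rescaledKernel
  fun_prop

theorem integrableOn_one_sub_rpow {r : ℝ} (hr : -1 < r) :
    IntegrableOn (fun t : ℝ => (1 - t) ^ r) (Ioo 0 1) := by
  have h := (intervalIntegral.intervalIntegrable_rpow' (a := 0) (b := 1) hr).comp_sub_left 1
  rw [sub_self, sub_zero] at h
  exact ((intervalIntegrable_iff_integrableOn_Ioc_of_le zero_le_one).1 h.symm).mono_set
    Ioo_subset_Ioc_self

theorem setIntegral_rpow_mul_one_sub_sq_rpow {α β : ℝ} (hα : 0 < α) (hβ : 0 < β) :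
    ∫ t in Ioo (0 : ℝ) 1, t ^ (α - 1) * (1 - t ^ 2) ^ (β - 1)
      = ProbabilityTheory.beta (α / 2) β / 2 := by
  have hsq : (fun t : ℝ => t ^ 2) '' Ioo 0 1 = Ioo 0 1 := by
    ext x
    constructor
    · rintro ⟨t, ⟨ht0, ht1⟩, rfl⟩
      exact ⟨by positivity, by nlinarith⟩
    · rintro ⟨hx0, hx1⟩
      exact ⟨√x, ⟨sqrt_pos.2 hx0, (sqrt_lt' one_pos).2 (by rwa [one_pow])⟩, sq_sqrt hx0.le⟩
  have hsub := integral_image_eq_integral_abs_deriv_smul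
    (measurableSet_Ioo (a := (0 : ℝ)) (b := 1)) (fun t _ => (hasDerivAt_pow 2 t).hasDerivWithinAt)
    ((pow_left_strictMonoOn₀ two_ne_zero).injOn.mono fun t ht => le_of_lt ht.1)
    (fun x => x ^ (α / 2 - 1) * (1 - x) ^ (β - 1))
  rw [hsq, ← integral_Ioc_eq_integral_Ioo, ← intervalIntegral.integral_of_le zero_le_one,
    integral_rpow_mul_one_sub_rpow_eq_beta (half_pos hα) hβ] at hsub
  rw [hsub, eq_div_iff two_ne_zero, ← MeasureTheory.integral_mul_const]
  refine setIntegral_congr_fun measurableSet_Ioo fun t ⟨ht0, ht1⟩ => ?_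
  have hpow : (t ^ 2) ^ (α / 2 - 1) * t = t ^ (α - 1) := by
    rw [← rpow_natCast, ← rpow_mul ht0.le, ← rpow_add_one ht0.ne']
    congr 1
    push_cast
    ring
  simp only [smul_eq_mul, Nat.cast_ofNat, Nat.add_one_sub_one, pow_one]
  rw [abs_of_pos (by positivity), ← hpow]
  ring

theorem setIntegral_rpow_mul_one_sub_sq_div_two_rpow {a : ℝ} (ha : 0 < a) :
    ∫ t in Ioo (0 : ℝ) 1, t ^ (a - 1) * ((1 - t ^ 2) / 2) ^ (-(1 : ℝ) / 2)
      = ProbabilityTheory.beta (1 / 2) (a / 2) / √2 := by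
  have h2 : (2 : ℝ) ^ (-(1 : ℝ) / 2) = (√2)⁻¹ := by
    rw [neg_div, rpow_neg zero_le_two, sqrt_eq_rpow]
  calc ∫ t in Ioo (0 : ℝ) 1, t ^ (a - 1) * ((1 - t ^ 2) / 2) ^ (-(1 : ℝ) / 2)
      = ∫ t in Ioo (0 : ℝ) 1, √2 * (t ^ (a - 1) * (1 - t ^ 2) ^ ((1 : ℝ) / 2 - 1)) := by
        refine setIntegral_congr_fun measurableSet_Ioo fun t ht => ?_
        have : 0 ≤ 1 - t ^ 2 := by nlinarith [ht.1, ht.2]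
        rw [div_rpow this zero_le_two, h2, div_inv_eq_mul,
          show (1 : ℝ) / 2 - 1 = -(1 : ℝ) / 2 by norm_num]
        ring
    _ = ProbabilityTheory.beta (1 / 2) (a / 2) / √2 := by
        rw [MeasureTheory.integral_const_mul, setIntegral_rpow_mul_one_sub_sq_rpow ha one_half_pos]
        unfold ProbabilityTheory.beta
        rw [mul_comm (Gamma (a / 2)), add_comm (a / 2)]
        field_simp
        rw [sq_sqrt zero_le_two]

theorem tendsto_setIntegral_mul_rescaledKernel {a : ℝ} (ha : 1 ≤ a) {f : ℝ → ℝ}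
    (hf : ContinuousOn f (Icc 0 π)) :
    Tendsto (fun ρ => ∫ t in Ioo (0 : ℝ) 1, f (t * ρ) * rescaledKernel a ρ t) (𝓝[>] 0)
      (𝓝 (f 0 * ∫ t in Ioo (0 : ℝ) 1, t ^ (a - 1) * ((1 - t ^ 2) / 2) ^ (-(1 : ℝ) / 2))) := by
  have hπ := pi_pos
  obtain ⟨M, hM⟩ := isCompact_Icc.exists_bound_of_continuousOn hf
  have hf0 : ContinuousWithinAt f (Ici 0) 0 :=
    (hf 0 ⟨le_rfl, hπ.le⟩).mono_of_mem_nhdsWithin (Icc_mem_nhdsGE hπ)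
  have hmaps : ∀ ρ ∈ Ioc 0 (π / 2), MapsTo (· * ρ) (Ioo 0 1) (Icc 0 π) :=
    fun ρ hρ t ht => ⟨by nlinarith [ht.1, hρ.1], by nlinarith [ht.1, ht.2, hρ.1, hρ.2]⟩
  rw [← MeasureTheory.integral_const_mul]
  refine tendsto_integral_filter_of_dominated_convergence
    (fun t => M * ((2 / π ^ 2) ^ (-(1 : ℝ) / 2) * (1 - t) ^ (-(1 : ℝ) / 2))) ?_ ?_ ?_ ?_
  · filter_upwards [Ioc_mem_nhdsGT (half_pos hπ)] with ρ hρ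
    exact ((hf.comp (continuous_mul_const ρ).continuousOn (hmaps ρ hρ)).aestronglyMeasurable
      measurableSet_Ioo).mul (measurable_rescaledKernel a ρ).aestronglyMeasurable
  · filter_upwards [Ioc_mem_nhdsGT (half_pos hπ)] with ρ hρ
    refine (ae_restrict_iff' measurableSet_Ioo).2 (.of_forall fun t ht => ?_)
    rw [norm_mul, norm_of_nonneg (rescaledKernel_nonneg a hρ.1.le (by linarith [hρ.2])
      ht.1.le ht.2.le)]
    have hfM := hM _ (hmaps ρ hρ ht)
    exact mul_le_mul hfM (rescaledKernel_le ha hρ.1 hρ.2 ht.1.le ht.2)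
      (rescaledKernel_nonneg a hρ.1.le (by linarith [hρ.2]) ht.1.le ht.2.le)
      ((norm_nonneg _).trans hfM)
  · exact ((integrableOn_one_sub_rpow (by norm_num)).const_mul _).const_mul _
  · refine (ae_restrict_iff' measurableSet_Ioo).2 (.of_forall fun t ⟨ht0, ht1⟩ => ?_)
    have hscale : Tendsto (t * ·) (𝓝[>] 0) (𝓝[≥] 0) :=
      tendsto_nhdsWithin_of_tendsto_nhds_of_eventually_within _
        (((continuous_const_mul t).tendsto' 0 0 (mul_zero t)).mono_left nhdsWithin_le_nhds)
        (eventually_nhdsWithin_of_forall fun ρ hρ => mul_nonneg ht0.le (le_of_lt hρ))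
    exact (hf0.tendsto.comp hscale).mul
      ((tendsto_rescaledKernel a ht0 ht1).mono_left (nhdsGT_le_nhdsNE 0))

/-- Delta-function limit of the spherical integral transform:
`lim_{ρ→0⁺} sin^{1-n}(ρ) ∫_0^ρ f(r) sin^{n-1}(r) (cos r - cos ρ)^{-1/2} dr
  = (1/√2) B(1/2, n/2) f(0)`, where `B(x,y) = Γ(x)Γ(y)/Γ(x+y)`. -/
theorem spherical_delta_limit (n : ℕ) (hn : 0 < n) (f : ℝ → ℝ)
    (hf : ContinuousOn f (Set.Icc 0 π)) :
    Tendsto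
      (fun ρ : ℝ => Real.sin ρ ^ ((1 : ℝ) - n) *
        ∫ r in (0 : ℝ)..ρ,
          f r * Real.sin r ^ ((n : ℝ) - 1) * (Real.cos r - Real.cos ρ) ^ (-(1 : ℝ) / 2))
      (𝓝[>] 0)
      (𝓝 (1 / Real.sqrt 2 *
        (Real.Gamma (1 / 2) * Real.Gamma ((n : ℝ) / 2) /
          Real.Gamma (1 / 2 + (n : ℝ) / 2)) * f 0)) := by
  have hlim := tendsto_setIntegral_mul_rescaledKernel (a := n) (by exact_mod_cast hn) hf
  rw [setIntegral_rpow_mul_one_sub_sq_div_two_rpow (by positivity)] at hlim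
  convert hlim.congr' ?_ using 2
  · unfold ProbabilityTheory.beta
    ring
  · filter_upwards [Ioo_mem_nhdsGT pi_pos] with ρ hρ
    exact (sin_rpow_mul_integral_eq_setIntegral_rescaledKernel f n hρ.1 hρ.2.le).symm
end

section
/- For positive integers m and nonnegative integers k, let c_{m,k} be defined by c_{m,0} = 1, c_{m,k} = Σ_{1 ≤ i_1 < i_2 < ⋯ < i_k ≤ m−1} i_1² i_2² ⋯ i_k² for 1 ≤ k ≤ m−1 (the k-th elementary symmetric polynomial of 1², 2², …, (m−1)²), and c_{m,k} = 0 for k ≥ m. Define real polynomials Q_m by Q_0 = Γ(1/2) = √π and the recurrence Q_m(t) = (m − 1/2 + (m−1)² t) Q_{m−1}(t) − t Q'_{m−1}(t) for m ≥ 1. Then for every m ≥ 1, Q_m(t) = Σ_{k=0}^{m−1} Γ(m − k + 1/2) c_{m,k} t^k. -/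
/-!
Running the recurrence in `ℝ[X]` (`heatPoly`) produces polynomials whose evaluations are the `Q_m`.
On coefficients, `p ↦ (m + 1/2 + m² t) p - t p'` sends `a_k` to `(m + 1/2 - k) a_k + m² a_{k-1}`.
For `a_{m,k} = Γ(m - k + 1/2) c_{m,k}`, the functional equation `Γ(s + 1) = s Γ(s)` (valid at the
half-integers, where `Γ` has no poles) turns this into the Pascal-type recurrence
`c_{m+1,k} = c_{m,k} + m² c_{m,k-1}` for the elementary symmetric polynomials of `1², …, m²`.
-/

open Real Finset

/-- `c m k` is the `k`-th elementary symmetric polynomial of `1², 2², …, (m-1)²`: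
`c m 0 = 1`, `c m k = Σ_{1 ≤ i₁ < ⋯ < i_k ≤ m-1} i₁²⋯i_k²` for `1 ≤ k ≤ m-1`, and
`c m k = 0` for `k ≥ m`. -/
noncomputable def c (m k : ℕ) : ℝ :=
  ∑ A ∈ (Finset.Icc 1 (m - 1)).powersetCard k, ∏ i ∈ A, (i : ℝ) ^ 2

open Polynomial

theorem Multiset.esymm_cons_succ {R : Type*} [CommSemiring R] (a : R) (s : Multiset R) (n : ℕ) :
    (a ::ₘ s).esymm (n + 1) = s.esymm (n + 1) + a * s.esymm n := by
  simp [Multiset.esymm, Multiset.powersetCard_cons, Multiset.sum_map_mul_left]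

lemma c_eq_esymm (m k : ℕ) :
    c m k = ((Icc 1 (m - 1)).val.map fun i : ℕ => (i : ℝ) ^ 2).esymm k :=
  (Finset.esymm_map_val _ _ _).symm

lemma c_zero_right (m : ℕ) : c m 0 = 1 := by simp [c]

lemma c_eq_zero_of_lt {m k : ℕ} (h : m - 1 < k) : c m k = 0 := by
  rw [c, powersetCard_eq_empty.mpr (by simpa using h), sum_empty]

lemma c_succ_succ (m k : ℕ) : c (m + 1) (k + 1) = c m (k + 1) + (m : ℝ) ^ 2 * c m k := by
  cases m with
  | zero => simp [c_eq_zero_of_lt]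
  | succ n =>
    rw [c_eq_esymm, c_eq_esymm, c_eq_esymm, Nat.add_sub_cancel, Nat.add_sub_cancel,
      ← insert_Icc_right_eq_Icc_add_one (by omega), insert_val_of_notMem (by simp),
      Multiset.map_cons, Multiset.esymm_cons_succ]

lemma int_add_half_ne_zero (n : ℤ) : (n : ℝ) + 1 / 2 ≠ 0 := by
  intro h
  have : (2 * n + 1 : ℤ) = 0 := by exact_mod_cast (by linarith : (2 * n + 1 : ℝ) = 0)
  omega

section CoeffRecurrence

variable {R : Type*} [CommRing R] (α β : R) (p : R[X])

lemma coeff_zero_sub_X_mul_derivative :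
    ((C α + C β * X) * p - X * derivative p).coeff 0 = α * p.coeff 0 := by
  simp [add_mul, mul_assoc]

lemma coeff_succ_sub_X_mul_derivative (k : ℕ) :
    ((C α + C β * X) * p - X * derivative p).coeff (k + 1) =
      (α - (k + 1)) * p.coeff (k + 1) + β * p.coeff k := by
  simp only [add_mul, mul_assoc, coeff_sub, coeff_add, coeff_C_mul, coeff_X_mul, coeff_derivative]
  ring

end CoeffRecurrence

noncomputable def heatPoly : ℕ → ℝ[X]
  | 0 => C (Gamma (1 / 2))
  | m + 1 => (C ((m : ℝ) + 1 / 2) + C ((m : ℝ) ^ 2) * X) * heatPoly m - X * derivative (heatPoly m)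

lemma coeff_heatPoly (m k : ℕ) : (heatPoly m).coeff k = Gamma ((m : ℝ) - k + 1 / 2) * c m k := by
  induction m generalizing k with
  | zero =>
    cases k with
    | zero => simp [heatPoly, c_zero_right]
    | succ k => simp [heatPoly, c_eq_zero_of_lt]
  | succ m ih =>
    cases k with
    | zero =>
      rw [heatPoly, coeff_zero_sub_X_mul_derivative, ih]
      simp only [CharP.cast_eq_zero, sub_zero, c_zero_right, mul_one, Nat.cast_add, Nat.cast_one]
      rw [add_assoc, add_comm 1, ← add_assoc, Gamma_add_one (by positivity)]
    | succ k =>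
      have hΓ : Gamma ((m : ℝ) - k + 1 / 2) =
          ((m : ℝ) - (k + 1) + 1 / 2) * Gamma ((m : ℝ) - (k + 1) + 1 / 2) := by
        rw [← Gamma_add_one (by simpa using int_add_half_ne_zero (m - (k + 1)))]
        ring_nf
      rw [heatPoly, coeff_succ_sub_X_mul_derivative, ih, ih, c_succ_succ]
      push_cast
      rw [show (m : ℝ) + 1 - (k + 1) + 1 / 2 = m - k + 1 / 2 by ring, hΓ]
      ring

lemma natDegree_heatPoly_lt {m : ℕ} (hm : 1 ≤ m) : (heatPoly m).natDegree < m := by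
  have : (heatPoly m).natDegree ≤ m - 1 := natDegree_le_iff_coeff_eq_zero.mpr fun k hk => by
    rw [coeff_heatPoly, c_eq_zero_of_lt hk, mul_zero]
  omega

/-- The polynomials defined by `Q₀ = Γ(1/2)` and the recurrence
`Q_m(t) = (m - 1/2 + (m-1)² t) Q_{m-1}(t) - t Q'_{m-1}(t)` satisfy
`Q_m(t) = Σ_{k=0}^{m-1} Γ(m-k+1/2) c_{m,k} t^k` for every `m ≥ 1`. -/
theorem hyperbolic_diagonal_polynomials (Q : ℕ → ℝ → ℝ)
    (hQ0 : ∀ t : ℝ, Q 0 t = Real.Gamma (1 / 2))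
    (hQrec : ∀ m : ℕ, 1 ≤ m → ∀ t : ℝ,
      Q m t = ((m : ℝ) - 1 / 2 + ((m : ℝ) - 1) ^ 2 * t) * Q (m - 1) t -
        t * deriv (Q (m - 1)) t) :
    ∀ m : ℕ, 1 ≤ m → ∀ t : ℝ,
      Q m t = ∑ k ∈ Finset.range m, Real.Gamma ((m : ℝ) - (k : ℝ) + 1 / 2) * c m k * t ^ k := by
  have hQ : ∀ m, Q m = fun t => (heatPoly m).eval t := by
    intro m
    induction m with
    | zero => funext t; simp [heatPoly, hQ0]
    | succ m ih =>
      funext t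
      rw [hQrec (m + 1) (by omega) t, Nat.add_sub_cancel, ih, Polynomial.deriv]
      simp only [heatPoly, eval_sub, eval_mul, eval_add, eval_C, eval_X]
      push_cast
      ring
  intro m hm t
  simp only [hQ, eval_eq_sum_range' (natDegree_heatPoly_lt hm), coeff_heatPoly]
end

section
/- Let m ≥ 1 be an integer and let u : (0,∞) × (0,π) → ℝ be a smooth function satisfying ∂_t u = ∂_r² u on (0,∞) × (0,π). Define v_0 = u, v_j(t,r) = −(1/sin r) ∂_r v_{j−1}(t,r) for 1 ≤ j ≤ m, and set v(t,r) = (e^{m²t}/(2π)^m) v_m(t,r). Then v satisfies the (2m+1)-dimensional spherical radial heat equation: ∂_t v = ∂_r² v + 2m cot(r) ∂_r v on (0,∞) × (0,π). -/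
open Real Set


noncomputable def Dr (f : ℝ → ℝ → ℝ) : ℝ → ℝ → ℝ := fun t r => deriv (fun y => f t y) r
noncomputable def Dt (f : ℝ → ℝ → ℝ) : ℝ → ℝ → ℝ := fun t r => deriv (fun τ => f τ r) t

variable {s : Set (ℝ × ℝ)} {f : ℝ → ℝ → ℝ} {t r : ℝ}

theorem hasDerivAt_snd_fderiv (hs : IsOpen s)
    (hf : ContDiffOn ℝ (⊤ : ℕ∞) (fun p : ℝ × ℝ => f p.1 p.2) s) (hp : (t, r) ∈ s) :
    HasDerivAt (fun y => f t y)
      (fderiv ℝ (fun p : ℝ × ℝ => f p.1 p.2) (t, r) (0, 1)) r := by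
  have hd : DifferentiableAt ℝ (fun p : ℝ × ℝ => f p.1 p.2) (t, r) :=
    (hf.differentiableOn (by simp)).differentiableAt (hs.mem_nhds hp)
  have hline : HasDerivAt (fun y : ℝ => ((t : ℝ), y)) ((0 : ℝ), (1 : ℝ)) r :=
    HasDerivAt.prodMk (hasDerivAt_const r t) (hasDerivAt_id r)
  exact hd.hasFDerivAt.comp_hasDerivAt r hline

theorem hasDerivAt_fst_fderiv (hs : IsOpen s)
    (hf : ContDiffOn ℝ (⊤ : ℕ∞) (fun p : ℝ × ℝ => f p.1 p.2) s) (hp : (t, r) ∈ s) :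
    HasDerivAt (fun τ => f τ r)
      (fderiv ℝ (fun p : ℝ × ℝ => f p.1 p.2) (t, r) (1, 0)) t := by
  have hd : DifferentiableAt ℝ (fun p : ℝ × ℝ => f p.1 p.2) (t, r) :=
    (hf.differentiableOn (by simp)).differentiableAt (hs.mem_nhds hp)
  have hline : HasDerivAt (fun τ : ℝ => (τ, (r : ℝ))) ((1 : ℝ), (0 : ℝ)) t :=
    HasDerivAt.prodMk (hasDerivAt_id t) (hasDerivAt_const t r)
  exact hd.hasFDerivAt.comp_hasDerivAt t hline

theorem hasDerivAt_Dr (hs : IsOpen s)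
    (hf : ContDiffOn ℝ (⊤ : ℕ∞) (fun p : ℝ × ℝ => f p.1 p.2) s) (hp : (t, r) ∈ s) :
    HasDerivAt (fun y => f t y) (Dr f t r) r := by
  have h1 := hasDerivAt_snd_fderiv hs hf hp
  have h2 := h1.deriv
  simp only [Dr]
  rw [h2]; exact h1

theorem hasDerivAt_Dt (hs : IsOpen s)
    (hf : ContDiffOn ℝ (⊤ : ℕ∞) (fun p : ℝ × ℝ => f p.1 p.2) s) (hp : (t, r) ∈ s) :
    HasDerivAt (fun τ => f τ r) (Dt f t r) t := by
  have h1 := hasDerivAt_fst_fderiv hs hf hp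
  have h2 := h1.deriv
  simp only [Dt]
  rw [h2]; exact h1

theorem contDiffOn_Dr (hs : IsOpen s)
    (hf : ContDiffOn ℝ (⊤ : ℕ∞) (fun p : ℝ × ℝ => f p.1 p.2) s) :
    ContDiffOn ℝ (⊤ : ℕ∞) (fun p : ℝ × ℝ => Dr f p.1 p.2) s := by
  have h1 : ContDiffOn ℝ (⊤ : ℕ∞)
      (fun p : ℝ × ℝ => fderiv ℝ (fun q : ℝ × ℝ => f q.1 q.2) p ((0 : ℝ), (1 : ℝ))) s :=
    (hf.fderiv_of_isOpen hs (by simp)).clm_apply contDiffOn_const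
  exact h1.congr fun p hp => (hasDerivAt_snd_fderiv hs hf hp).deriv

theorem contDiffOn_Dt (hs : IsOpen s)
    (hf : ContDiffOn ℝ (⊤ : ℕ∞) (fun p : ℝ × ℝ => f p.1 p.2) s) :
    ContDiffOn ℝ (⊤ : ℕ∞) (fun p : ℝ × ℝ => Dt f p.1 p.2) s := by
  have h1 : ContDiffOn ℝ (⊤ : ℕ∞)
      (fun p : ℝ × ℝ => fderiv ℝ (fun q : ℝ × ℝ => f q.1 q.2) p ((1 : ℝ), (0 : ℝ))) s :=
    (hf.fderiv_of_isOpen hs (by simp)).clm_apply contDiffOn_const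
  exact h1.congr fun p hp => (hasDerivAt_fst_fderiv hs hf hp).deriv

theorem Dt_Dr_comm (hs : IsOpen s)
    (hf : ContDiffOn ℝ (⊤ : ℕ∞) (fun p : ℝ × ℝ => f p.1 p.2) s) (hp : (t, r) ∈ s) :
    Dt (Dr f) t r = Dr (Dt f) t r := by
  set F : ℝ × ℝ → ℝ := fun p => f p.1 p.2 with hF
  set A : ℝ × ℝ → (ℝ × ℝ) →L[ℝ] ℝ := fderiv ℝ F with hA
  have hAsm : ContDiffOn ℝ (⊤ : ℕ∞) A s := hf.fderiv_of_isOpen hs (by simp)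
  have hAdiff : DifferentiableAt ℝ A (t, r) :=
    (hAsm.differentiableOn (by simp)).differentiableAt (hs.mem_nhds hp)
  set B := fderiv ℝ A (t, r) with hB
  have hAd : HasFDerivAt A B (t, r) := hAdiff.hasFDerivAt
  have hev : ∀ᶠ q in nhds (t, r), HasFDerivAt F (A q) q := by
    filter_upwards [hs.mem_nhds hp] with q hq
    exact ((hf.differentiableOn (by simp)).differentiableAt (hs.mem_nhds hq)).hasFDerivAt
  have hsym := second_derivative_symmetric_of_eventually hev hAd
    ((1 : ℝ), (0 : ℝ)) ((0 : ℝ), (1 : ℝ))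
  -- Dt (Dr f) t r = B (1,0) (0,1)
  have hleft : Dt (Dr f) t r = B ((1 : ℝ), (0 : ℝ)) ((0 : ℝ), (1 : ℝ)) := by
    have hline : HasDerivAt (fun τ : ℝ => (τ, (r : ℝ))) ((1 : ℝ), (0 : ℝ)) t :=
      HasDerivAt.prodMk (hasDerivAt_id t) (hasDerivAt_const t r)
    have h1 : HasDerivAt (fun τ => A (τ, r)) (B ((1 : ℝ), (0 : ℝ))) t :=
      hAd.comp_hasDerivAt t hline
    have h2 : HasDerivAt (fun τ => A (τ, r) ((0 : ℝ), (1 : ℝ)))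
        (B ((1 : ℝ), (0 : ℝ)) ((0 : ℝ), (1 : ℝ))) t := by
      have := h1.clm_apply (hasDerivAt_const t ((0 : ℝ), (1 : ℝ)))
      simpa using this
    have hopen : IsOpen {τ : ℝ | (τ, r) ∈ s} := hs.preimage (continuous_id.prodMk continuous_const)
    have hmem : t ∈ {τ : ℝ | (τ, r) ∈ s} := hp
    have heq : (fun τ => Dr f τ r) =ᶠ[nhds t] (fun τ => A (τ, r) ((0 : ℝ), (1 : ℝ))) := by
      filter_upwards [hopen.mem_nhds hmem] with τ hτ
      exact (hasDerivAt_snd_fderiv hs hf hτ).deriv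
    have h3 : HasDerivAt (fun τ => Dr f τ r)
        (B ((1 : ℝ), (0 : ℝ)) ((0 : ℝ), (1 : ℝ))) t := h2.congr_of_eventuallyEq heq
    exact h3.deriv
  have hright : Dr (Dt f) t r = B ((0 : ℝ), (1 : ℝ)) ((1 : ℝ), (0 : ℝ)) := by
    have hline : HasDerivAt (fun y : ℝ => ((t : ℝ), y)) ((0 : ℝ), (1 : ℝ)) r :=
      HasDerivAt.prodMk (hasDerivAt_const r t) (hasDerivAt_id r)
    have h1 : HasDerivAt (fun y => A (t, y)) (B ((0 : ℝ), (1 : ℝ))) r :=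
      hAd.comp_hasDerivAt r hline
    have h2 : HasDerivAt (fun y => A (t, y) ((1 : ℝ), (0 : ℝ)))
        (B ((0 : ℝ), (1 : ℝ)) ((1 : ℝ), (0 : ℝ))) r := by
      have := h1.clm_apply (hasDerivAt_const r ((1 : ℝ), (0 : ℝ)))
      simpa using this
    have hopen : IsOpen {y : ℝ | ((t : ℝ), y) ∈ s} := hs.preimage (continuous_const.prodMk continuous_id)
    have hmem : r ∈ {y : ℝ | ((t : ℝ), y) ∈ s} := hp
    have heq : (fun y => Dt f t y) =ᶠ[nhds r] (fun y => A (t, y) ((1 : ℝ), (0 : ℝ))) := by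
      filter_upwards [hopen.mem_nhds hmem] with y hy
      exact (hasDerivAt_fst_fderiv hs hf hy).deriv
    have h3 : HasDerivAt (fun y => Dt f t y)
        (B ((0 : ℝ), (1 : ℝ)) ((1 : ℝ), (0 : ℝ))) r := h2.congr_of_eventuallyEq heq
    exact h3.deriv
  rw [hleft, hright, hsym]

theorem negInvSin_hasDerivAt {y : ℝ} (hy : Real.sin y ≠ 0) :
    HasDerivAt (fun x => -(1 / Real.sin x)) (Real.cos y / Real.sin y ^ 2) y := by
  have h := ((hasDerivAt_const y (1 : ℝ)).div (Real.hasDerivAt_sin y) hy).neg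
  exact h.congr_deriv (by ring)

theorem step_lemma (a b : ℝ) (h g : ℝ → ℝ → ℝ)
    (hsm : ContDiffOn ℝ (⊤ : ℕ∞) (fun p : ℝ × ℝ => h p.1 p.2) (Set.Ioi 0 ×ˢ Set.Ioo 0 π))
    (heq : ∀ t ∈ Set.Ioi (0 : ℝ), ∀ r ∈ Set.Ioo (0 : ℝ) π,
      Dt h t r = Dr (Dr h) t r + a * (Real.cos r / Real.sin r) * Dr h t r + b * h t r)
    (hg : ∀ t r : ℝ, g t r = -(1 / Real.sin r) * Dr h t r) :
    ContDiffOn ℝ (⊤ : ℕ∞) (fun p : ℝ × ℝ => g p.1 p.2) (Set.Ioi 0 ×ˢ Set.Ioo 0 π) ∧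
    ∀ t ∈ Set.Ioi (0 : ℝ), ∀ r ∈ Set.Ioo (0 : ℝ) π,
      Dt g t r = Dr (Dr g) t r + (a + 2) * (Real.cos r / Real.sin r) * Dr g t r
        + (b - (a + 1)) * g t r := by
  have hΩ : IsOpen (Set.Ioi (0 : ℝ) ×ˢ Set.Ioo (0 : ℝ) π) := isOpen_Ioi.prod isOpen_Ioo
  have sm1 : ContDiffOn ℝ (⊤ : ℕ∞) (fun p : ℝ × ℝ => Dr h p.1 p.2) (Set.Ioi 0 ×ˢ Set.Ioo 0 π) :=
    contDiffOn_Dr hΩ hsm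
  have sm2 : ContDiffOn ℝ (⊤ : ℕ∞) (fun p : ℝ × ℝ => Dr (Dr h) p.1 p.2) (Set.Ioi 0 ×ˢ Set.Ioo 0 π) :=
    contDiffOn_Dr hΩ sm1
  have hsin : ∀ y ∈ Set.Ioo (0 : ℝ) π, Real.sin y ≠ 0 := fun y hy =>
    (Real.sin_pos_of_pos_of_lt_pi hy.1 hy.2).ne'
  constructor
  · have hc : ContDiffOn ℝ (⊤ : ℕ∞) (fun p : ℝ × ℝ => -(1 / Real.sin p.2))
        (Set.Ioi (0 : ℝ) ×ˢ Set.Ioo (0 : ℝ) π) := by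
      apply ContDiffOn.neg
      apply ContDiffOn.div contDiffOn_const
      · exact (Real.contDiff_sin.comp contDiff_snd).contDiffOn
      · intro p hp
        exact hsin p.2 (Set.mem_prod.mp hp).2
    exact (hc.mul sm1).congr fun p _ => hg p.1 p.2
  · intro t ht r hr
    have hmem : ((t : ℝ), r) ∈ Set.Ioi (0 : ℝ) ×ˢ Set.Ioo (0 : ℝ) π := Set.mem_prod.mpr ⟨ht, hr⟩
    have hS : Real.sin r ≠ 0 := hsin r hr
    -- derivatives in r at r
    have hD0 : HasDerivAt (fun y => h t y) (Dr h t r) r := hasDerivAt_Dr hΩ hsm hmem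
    have hD1 : HasDerivAt (fun y => Dr h t y) (Dr (Dr h) t r) r := hasDerivAt_Dr hΩ sm1 hmem
    have hD2 : HasDerivAt (fun y => Dr (Dr h) t y) (Dr (Dr (Dr h)) t r) r :=
      hasDerivAt_Dr hΩ sm2 hmem
    -- E1 : Dt g t r = -(1/sin r) * Dr (Dt h) t r
    have E1 : Dt g t r = -(1 / Real.sin r) * Dr (Dt h) t r := by
      have hfg : (fun τ => g τ r) = fun τ => -(1 / Real.sin r) * Dr h τ r :=
        funext fun τ => hg τ r
      have : Dt g t r = -(1 / Real.sin r) * Dt (Dr h) t r := by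
        simp only [Dt, hfg]
        exact deriv_const_mul_field _
      rw [this, Dt_Dr_comm hΩ hsm hmem]
    -- E2 : Dr (Dt h) t r
    have hRHS : HasDerivAt
        (fun x => Dr (Dr h) t x + a * (Real.cos x / Real.sin x) * Dr h t x + b * h t x)
        (Dr (Dr (Dr h)) t r
          + ((a * ((-Real.sin r * Real.sin r - Real.cos r * Real.cos r) / Real.sin r ^ 2))
              * Dr h t r + a * (Real.cos r / Real.sin r) * Dr (Dr h) t r)
          + b * Dr h t r) r := by
      have hcot : HasDerivAt (fun x => a * (Real.cos x / Real.sin x))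
          (a * ((-Real.sin r * Real.sin r - Real.cos r * Real.cos r) / Real.sin r ^ 2)) r :=
        ((Real.hasDerivAt_cos r).div (Real.hasDerivAt_sin r) hS).const_mul a
      exact (hD2.add (hcot.mul hD1)).add (hD0.const_mul b)
    have E2 : Dr (Dt h) t r = Dr (Dr (Dr h)) t r
          + ((a * ((-Real.sin r * Real.sin r - Real.cos r * Real.cos r) / Real.sin r ^ 2))
              * Dr h t r + a * (Real.cos r / Real.sin r) * Dr (Dr h) t r)
          + b * Dr h t r := by
      have hev : (fun x => Dt h t x) =ᶠ[nhds r]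
          (fun x => Dr (Dr h) t x + a * (Real.cos x / Real.sin x) * Dr h t x + b * h t x) := by
        filter_upwards [isOpen_Ioo.mem_nhds hr] with y hy
        exact heq t ht y hy
      have : Dr (Dt h) t r = deriv
          (fun x => Dr (Dr h) t x + a * (Real.cos x / Real.sin x) * Dr h t x + b * h t x) r :=
        hev.deriv_eq
      rw [this, hRHS.deriv]
    -- derivative of g in r at arbitrary y near r
    have hgd : ∀ y ∈ Set.Ioo (0 : ℝ) π, HasDerivAt (fun x => g t x)
        (Real.cos y / Real.sin y ^ 2 * Dr h t y + -(1 / Real.sin y) * Dr (Dr h) t y) y := by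
      intro y hy
      have hfg : (fun x => g t x) = fun x => -(1 / Real.sin x) * Dr h t x :=
        funext fun x => hg t x
      rw [hfg]
      exact (negInvSin_hasDerivAt (hsin y hy)).mul
        (hasDerivAt_Dr hΩ sm1 (Set.mem_prod.mpr ⟨ht, hy⟩))
    have E5 : Dr g t r = Real.cos r / Real.sin r ^ 2 * Dr h t r
        + -(1 / Real.sin r) * Dr (Dr h) t r := (hgd r hr).deriv
    -- E4 : second r-derivative of g
    have hc1 : HasDerivAt (fun x => Real.cos x / Real.sin x ^ 2)
        ((-Real.sin r * Real.sin r ^ 2 - Real.cos r * ((2 : ℝ) * Real.sin r ^ 1 * Real.cos r))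
          / (Real.sin r ^ 2) ^ 2) r :=
      (Real.hasDerivAt_cos r).div ((Real.hasDerivAt_sin r).pow 2) (pow_ne_zero 2 hS)
    have hRHS2 : HasDerivAt
        (fun x => Real.cos x / Real.sin x ^ 2 * Dr h t x + -(1 / Real.sin x) * Dr (Dr h) t x)
        (((-Real.sin r * Real.sin r ^ 2 - Real.cos r * ((2 : ℝ) * Real.sin r ^ 1 * Real.cos r))
            / (Real.sin r ^ 2) ^ 2 * Dr h t r
          + Real.cos r / Real.sin r ^ 2 * Dr (Dr h) t r)
          + (Real.cos r / Real.sin r ^ 2 * Dr (Dr h) t r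
          + -(1 / Real.sin r) * Dr (Dr (Dr h)) t r)) r :=
      (hc1.mul hD1).add ((negInvSin_hasDerivAt hS).mul hD2)
    have E4 : Dr (Dr g) t r =
        ((-Real.sin r * Real.sin r ^ 2 - Real.cos r * ((2 : ℝ) * Real.sin r ^ 1 * Real.cos r))
            / (Real.sin r ^ 2) ^ 2 * Dr h t r
          + Real.cos r / Real.sin r ^ 2 * Dr (Dr h) t r)
          + (Real.cos r / Real.sin r ^ 2 * Dr (Dr h) t r
          + -(1 / Real.sin r) * Dr (Dr (Dr h)) t r) := by
      have hev : (fun x => Dr g t x) =ᶠ[nhds r]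
          (fun x => Real.cos x / Real.sin x ^ 2 * Dr h t x
            + -(1 / Real.sin x) * Dr (Dr h) t x) := by
        filter_upwards [isOpen_Ioo.mem_nhds hr] with y hy
        exact (hgd y hy).deriv
      have : Dr (Dr g) t r = deriv
          (fun x => Real.cos x / Real.sin x ^ 2 * Dr h t x
            + -(1 / Real.sin x) * Dr (Dr h) t x) r := hev.deriv_eq
      rw [this, hRHS2.deriv]
    -- finish algebraically
    rw [E1, E2, E4, E5, hg t r]
    field_simp
    ring

/-- Iterated recurrence for odd-dimensional spherical heat kernels: if `u` solves the
one-dimensional heat equation `∂_t u = ∂_r² u` on `(0,∞) × (0,π)`, `v₀ = u`,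
`v_j = -(1/sin r) ∂_r v_{j-1}` for `1 ≤ j ≤ m`, and `v = (e^{m²t}/(2π)^m) v_m`, then `v`
satisfies the `(2m+1)`-dimensional spherical radial heat equation
`∂_t v = ∂_r² v + 2m cot(r) ∂_r v` on `(0,∞) × (0,π)`. -/
theorem odd_sphere_heat_kernel_formula (m : ℕ) (hm : 1 ≤ m) (u : ℝ → ℝ → ℝ)
    (hu : ContDiffOn ℝ (⊤ : ℕ∞) (fun p : ℝ × ℝ => u p.1 p.2) (Set.Ioi 0 ×ˢ Set.Ioo 0 π))
    (hueq : ∀ t ∈ Set.Ioi (0 : ℝ), ∀ r ∈ Set.Ioo (0 : ℝ) π,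
      deriv (fun τ => u τ r) t = deriv (fun x => deriv (fun y => u t y) x) r)
    (v : ℕ → ℝ → ℝ → ℝ) (hv0 : v 0 = u)
    (hvj : ∀ j : ℕ, 1 ≤ j → j ≤ m → ∀ t r : ℝ,
      v j t r = -(1 / Real.sin r) * deriv (fun x => v (j - 1) t x) r)
    (V : ℝ → ℝ → ℝ)
    (hV : ∀ t r : ℝ, V t r = Real.exp ((m : ℝ) ^ 2 * t) / (2 * π) ^ m * v m t r) :
    ∀ t ∈ Set.Ioi (0 : ℝ), ∀ r ∈ Set.Ioo (0 : ℝ) π,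
      deriv (fun τ => V τ r) t =
        deriv (fun x => deriv (fun y => V t y) x) r +
          2 * (m : ℝ) * (Real.cos r / Real.sin r) * deriv (fun x => V t x) r := by
  have hΩ : IsOpen (Set.Ioi (0 : ℝ) ×ˢ Set.Ioo (0 : ℝ) π) := isOpen_Ioi.prod isOpen_Ioo
  have key : ∀ j : ℕ, j ≤ m →
      ContDiffOn ℝ (⊤ : ℕ∞) (fun p : ℝ × ℝ => v j p.1 p.2) (Set.Ioi 0 ×ˢ Set.Ioo 0 π) ∧
      ∀ t ∈ Set.Ioi (0 : ℝ), ∀ r ∈ Set.Ioo (0 : ℝ) π,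
        Dt (v j) t r = Dr (Dr (v j)) t r
          + 2 * (j : ℝ) * (Real.cos r / Real.sin r) * Dr (v j) t r
          + (-(j : ℝ) ^ 2) * v j t r := by
    intro j
    induction j with
    | zero =>
      intro _
      refine ⟨hv0 ▸ hu, ?_⟩
      intro t ht r hr
      rw [hv0]
      simp only [Dt, Dr, Nat.cast_zero]
      rw [hueq t ht r hr]
      ring
    | succ j ih =>
      intro hj1
      obtain ⟨ihs, ihe⟩ := ih (Nat.le_of_succ_le hj1)
      have hgrec : ∀ t r : ℝ, v (j + 1) t r = -(1 / Real.sin r) * Dr (v j) t r := by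
        intro t r
        have := hvj (j + 1) (Nat.succ_le_succ (Nat.zero_le j)) hj1 t r
        simpa [Dr] using this
      obtain ⟨s1, s2⟩ := step_lemma (2 * (j : ℝ)) (-(j : ℝ) ^ 2) (v j) (v (j + 1))
        ihs ihe hgrec
      refine ⟨s1, ?_⟩
      intro t ht r hr
      rw [s2 t ht r hr]
      push_cast
      ring
  obtain ⟨smm, solm⟩ := key m le_rfl
  intro t ht r hr
  have hmem : ((t : ℝ), r) ∈ Set.Ioi (0 : ℝ) ×ˢ Set.Ioo (0 : ℝ) π := Set.mem_prod.mpr ⟨ht, hr⟩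
  have hvd : HasDerivAt (fun τ => v m τ r) (Dt (v m) t r) t := hasDerivAt_Dt hΩ smm hmem
  have hc : HasDerivAt (fun τ : ℝ => Real.exp ((m : ℝ) ^ 2 * τ) / (2 * π) ^ m)
      ((m : ℝ) ^ 2 * Real.exp ((m : ℝ) ^ 2 * t) / (2 * π) ^ m) t := by
    have h1 : HasDerivAt (fun τ : ℝ => (m : ℝ) ^ 2 * τ) ((m : ℝ) ^ 2) t := by
      simpa using (hasDerivAt_id t).const_mul ((m : ℝ) ^ 2)
    have h2 := h1.exp.div_const ((2 * π) ^ m)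
    exact h2.congr_deriv (by ring)
  have hL := (hc.mul hvd).deriv
  simp only [hV]
  rw [show (fun τ => rexp (↑m ^ 2 * τ) / (2 * π) ^ m * v m τ r) =
    ((fun τ => rexp (↑m ^ 2 * τ) / (2 * π) ^ m) * fun τ => v m τ r) from rfl, hL]
  simp only [deriv_const_mul_field']
  have solm' := solm t ht r hr
  simp only [Dt, Dr] at solm' ⊢
  rw [solm']
  ring
end
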